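/- arXiv:1606.08716 — 10 statements merged into one kernel-verified Lean document; each statement's English description precedes it below -/
import Mathlib

section
/- Let n ≥ 3 be odd and set λ_k = π(4k−n)/(n+2) for k = 1,…,n. Then the numbers z_k = e^{−iλ_k} are pairwise distinct and {z_1,…,z_n} = {z ∈ ℂ : z^{n+2} = −1} \ {e^{iπn/(n+2)}, e^{−iπn/(n+2)}}, and there exist real numbers X_1,…,X_n with |X_k| = 2^{1−n} ∏_{s≠k} |sin((λ_s−λ_k)/2)|^{−1} such that ∑_{k=1}^n X_k e^{−i m λ_k} = δ_{m,1} for every m = 1,…,n. -/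
/-!
Put `ω = e^{-4πi/(n+2)}` and `c = e^{iπn/(n+2)}`. Since `n + 2` is odd, `ω` is a primitive
`(n+2)`-th root of unity, and `c^{n+2} = (-1)^n = -1`; so the roots of `z^{n+2} = -1` are the
`c ω^j`, `0 ≤ j ≤ n + 1`. The nodes are `z_k = c ω^k`, `1 ≤ k ≤ n`, and the two excluded points
are `j = 0` and `j = n + 1`.

The moment conditions are solved by `X_k = L_k(0) / z_k`, with `L_k` the Lagrange basis polynomial
of the nodes: `∑ X_k z_k^m = ∑ z_k^{m-1} L_k(0)` is the value at `0` of the interpolant of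
`X^{m-1}`. As `|z_s| = 1`, `|L_k(0)| = ∏_{s≠k} |z_s - z_k|⁻¹ = ∏_{s≠k} (2 |sin((λ_s - λ_k)/2)|)⁻¹`.
Conjugation turns each factor `z_s / (z_s - z_k)` of `L_k(0)` into `z_k / (z_k - z_s)`; as there is
an even number `n - 1` of factors, `∏ z_s = -1` and `z_k^{n+2} = -1`, this shows `X_k` is real.
-/

open Complex ComplexConjugate Finset
open scoped Real

section LagrangeWeight

variable {F ι : Type*} [Field F] [Fintype ι] [DecidableEq ι]

def lagrangeWeight (z : ι → F) (k : ι) : F :=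
  ∏ s ∈ univ.erase k, z s / (z s - z k)

theorem eval_zero_lagrange_basis {z : ι → F} (hz : Function.Injective z) (k : ι) :
    (Lagrange.basis univ z k).eval 0 = lagrangeWeight z k := by
  rw [Lagrange.basis, Polynomial.eval_prod, lagrangeWeight]
  refine prod_congr rfl fun s hs => ?_
  have hks : z k - z s ≠ 0 := sub_ne_zero.mpr (hz.ne (ne_of_mem_erase hs).symm)
  have hsk : z s - z k ≠ 0 := sub_ne_zero.mpr (hz.ne (ne_of_mem_erase hs))
  simp only [Lagrange.basisDivisor, Polynomial.eval_mul, Polynomial.eval_C, Polynomial.eval_sub,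
    Polynomial.eval_X]
  field_simp
  ring

theorem sum_pow_mul_lagrangeWeight {z : ι → F} (hz : Function.Injective z) {j : ℕ}
    (hj : j < Fintype.card ι) :
    ∑ k, z k ^ j * lagrangeWeight z k = if j = 0 then 1 else 0 := by
  have hdeg : (Polynomial.X ^ j : Polynomial F).degree < #(univ : Finset ι) := by
    rw [Polynomial.degree_X_pow, card_univ]
    exact_mod_cast hj
  have h := congrArg (Polynomial.eval 0) (Lagrange.eq_interpolate hz.injOn hdeg)
  simp only [Lagrange.interpolate_apply, Polynomial.eval_finsetSum, Polynomial.eval_mul,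
    Polynomial.eval_C, Polynomial.eval_pow, Polynomial.eval_X, eval_zero_lagrange_basis hz,
    zero_pow_eq] at h
  exact h.symm

theorem conj_div_sub_of_norm_eq_one {a b : ℂ} (ha : ‖a‖ = 1) (hb : ‖b‖ = 1) (hab : a ≠ b) :
    conj (a / (a - b)) = b / (b - a) := by
  have ha0 : a ≠ 0 := norm_ne_zero_iff.mp (by simp [ha])
  have hb0 : b ≠ 0 := norm_ne_zero_iff.mp (by simp [hb])
  have hba : b - a ≠ 0 := sub_ne_zero.mpr hab.symm
  rw [map_div₀, map_sub, ← inv_eq_conj ha, ← inv_eq_conj hb, inv_sub_inv ha0 hb0]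
  field_simp

theorem norm_lagrangeWeight {z : ι → ℂ} (hnorm : ∀ k, ‖z k‖ = 1) (k : ι) :
    ‖lagrangeWeight z k‖ = ∏ s ∈ univ.erase k, ‖z s - z k‖⁻¹ := by
  simp [lagrangeWeight, norm_prod, hnorm]

theorem conj_lagrangeWeight_div_self {z : ι → ℂ} (hz : Function.Injective z)
    (hnorm : ∀ k, ‖z k‖ = 1) (hodd : Odd (Fintype.card ι)) (hprod : ∏ k, z k = -1)
    (hroot : ∀ k, z k ^ (Fintype.card ι + 2) = -1) (k : ι) :
    conj (lagrangeWeight z k / z k) = lagrangeWeight z k / z k := by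
  obtain ⟨t, ht⟩ := hodd
  set D := ∏ s ∈ univ.erase k, (z s - z k)
  have hcard : #(univ.erase k) = 2 * t := by
    rw [card_erase_of_mem (mem_univ k), card_univ, ht, Nat.add_sub_cancel]
  have hzk : z k ≠ 0 := norm_ne_zero_iff.mp (by simp [hnorm])
  have hD : D ≠ 0 :=
    prod_ne_zero_iff.mpr fun s hs => sub_ne_zero.mpr (hz.ne (ne_of_mem_erase hs))
  have hweight : lagrangeWeight z k = -(z k)⁻¹ / D := by
    have hP : ∏ s ∈ univ.erase k, z s = -(z k)⁻¹ := by
      field_simp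
      linear_combination (mul_prod_erase univ z (mem_univ k)).trans hprod
    rw [lagrangeWeight, prod_div_distrib, hP]
  have hconj : conj (lagrangeWeight z k) = z k ^ (2 * t) / D := by
    have hflip : ∏ s ∈ univ.erase k, (z k - z s) = D := by
      rw [prod_congr rfl fun s _ => (neg_sub (z s) (z k)).symm, prod_neg, hcard, pow_mul,
        neg_one_sq, one_pow, one_mul]
    rw [lagrangeWeight, map_prod, ← hflip, ← hcard, ← prod_const, ← prod_div_distrib]
    refine prod_congr rfl fun s hs => ?_
    exact conj_div_sub_of_norm_eq_one (hnorm s) (hnorm k) (hz.ne (ne_of_mem_erase hs))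
  have hpow : z k ^ (2 * t + 3) = -1 := hroot k ▸ by rw [ht]
  rw [map_div₀, hconj, hweight, ← inv_eq_conj (hnorm k)]
  field_simp
  linear_combination hpow

theorem exists_real_moment_solution {z : ι → ℂ} (hz : Function.Injective z)
    (hnorm : ∀ k, ‖z k‖ = 1) (hodd : Odd (Fintype.card ι)) (hprod : ∏ k, z k = -1)
    (hroot : ∀ k, z k ^ (Fintype.card ι + 2) = -1) :
    ∃ X : ι → ℝ, (∀ k, |X k| = ∏ s ∈ univ.erase k, ‖z s - z k‖⁻¹) ∧
      ∀ m ∈ Icc 1 (Fintype.card ι), ∑ k, (X k : ℂ) * z k ^ m = if m = 1 then 1 else 0 := by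
  have hreal k : ((lagrangeWeight z k / z k).re : ℂ) = lagrangeWeight z k / z k :=
    conj_eq_iff_re.mp (conj_lagrangeWeight_div_self hz hnorm hodd hprod hroot k)
  refine ⟨fun k => (lagrangeWeight z k / z k).re, fun k => ?_, fun m hm => ?_⟩
  · rw [← Real.norm_eq_abs, ← Complex.norm_real, hreal, norm_div, hnorm, div_one,
      norm_lagrangeWeight hnorm]
  · obtain ⟨j, rfl⟩ : ∃ j, m = j + 1 := ⟨m - 1, by grind⟩
    have hj : j < Fintype.card ι := by grind
    simp only [add_eq_right, ← sum_pow_mul_lagrangeWeight hz hj]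
    refine sum_congr rfl fun k _ => ?_
    have hzk : z k ≠ 0 := norm_ne_zero_iff.mp (by simp [hnorm])
    rw [hreal, pow_succ]
    field_simp

end LagrangeWeight

theorem norm_exp_neg_I_mul_sub (a b : ℝ) :
    ‖exp (-I * a) - exp (-I * b)‖ = 2 * |Real.sin ((a - b) / 2)| := by
  have h : exp (-I * a) - exp (-I * b) =
      -(exp (-I * a) * (exp (I * ((a - b : ℝ) : ℂ)) - 1)) := by
    rw [mul_sub, ← exp_add, mul_one]
    push_cast
    ring_nf
  rw [h, norm_neg, norm_mul, norm_exp_I_mul_ofReal_sub_one, norm_mul, Real.norm_eq_abs]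
  simp [norm_exp]

theorem sum_range_four_mul_succ_sub (n m : ℕ) :
    ∑ j ∈ range m, (4 * ((j : ℝ) + 1) - n) = m * (2 * m + 2 - n) := by
  induction m with
  | zero => simp
  | succ m ih =>
    rw [sum_range_succ, ih]
    push_cast
    ring

section RootsOfMinusOne

variable {n : ℕ}

noncomputable def rootStep (n : ℕ) : ℂ := exp (-(2 * π * I * (2 / (n + 2 : ℕ))))

noncomputable def rootBase (n : ℕ) : ℂ := exp (I * ((π * n / (n + 2) : ℝ) : ℂ))

theorem isPrimitiveRoot_rootStep (hodd : Odd n) : IsPrimitiveRoot (rootStep n) (n + 2) := by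
  rw [rootStep, exp_neg]
  exact (isPrimitiveRoot_exp_of_coprime 2 (n + 2) (by omega)
    (Nat.coprime_two_left.mpr (hodd.add_even even_two))).inv

theorem rootStep_pow_mul_rootBase (n j : ℕ) :
    rootStep n ^ j * rootBase n = exp (-I * ((π * (4 * j - n) / (n + 2) : ℝ) : ℂ)) := by
  rw [rootStep, rootBase, ← exp_nat_mul, ← exp_add]
  have : (n : ℂ) + 2 ≠ 0 := by norm_cast
  congr 1
  push_cast
  field_simp
  ring

theorem rootBase_pow (hodd : Odd n) : rootBase n ^ (n + 2) = -1 := by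
  have h : ((n + 2 : ℕ) : ℂ) * (I * ((π * n / (n + 2) : ℝ) : ℂ)) = n * (π * I) := by
    have : (n : ℂ) + 2 ≠ 0 := by norm_cast
    push_cast
    field_simp
  rw [rootBase, ← exp_nat_mul, h, exp_nat_mul, exp_pi_mul_I, hodd.neg_one_pow]

theorem rootStep_pow_succ_mul_rootBase (n : ℕ) :
    rootStep n ^ (n + 1) * rootBase n = exp (-I * ((π * n / (n + 2) : ℝ) : ℂ)) := by
  have h : -I * ((π * (4 * (n + 1 : ℕ) - n) / (n + 2) : ℝ) : ℂ)
      = -I * ((π * n / (n + 2) : ℝ) : ℂ) - 2 * π * I := by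
    have : (n : ℂ) + 2 ≠ 0 := by norm_cast
    push_cast
    field_simp
    ring
  rw [rootStep_pow_mul_rootBase, h, exp_periodic.sub_eq]

theorem pow_add_two_eq_neg_one_iff (hodd : Odd n) {w : ℂ} :
    w ^ (n + 2) = -1 ↔ ∃ j < n + 2, rootStep n ^ j * rootBase n = w := by
  rw [← Polynomial.mem_nthRoots (by omega),
    (isPrimitiveRoot_rootStep hodd).nthRoots_eq (rootBase_pow hodd)]
  simp only [Multiset.mem_map, Multiset.mem_range]

theorem eq_of_rootStep_pow_mul_rootBase_eq (hodd : Odd n) {i j : ℕ} (hi : i < n + 2)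
    (hj : j < n + 2) (h : rootStep n ^ i * rootBase n = rootStep n ^ j * rootBase n) : i = j :=
  (isPrimitiveRoot_rootStep hodd).pow_inj hi hj (mul_right_cancel₀ (exp_ne_zero _) h)

theorem range_rootStep_pow_succ_mul_rootBase (hodd : Odd n) :
    Set.range (fun k : Fin n => rootStep n ^ ((k : ℕ) + 1) * rootBase n) =
      {w : ℂ | w ^ (n + 2) = -1} \ {rootBase n, rootStep n ^ (n + 1) * rootBase n} := by
  ext w
  simp only [Set.mem_range, Set.mem_sdiff, Set.mem_ofPred_eq, pow_add_two_eq_neg_one_iff hodd,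
    Set.mem_insert_iff, Set.mem_singleton_iff]
  constructor
  · rintro ⟨k, rfl⟩
    refine ⟨⟨k + 1, by omega, rfl⟩, ?_⟩
    rintro (h | h)
    · exact absurd (eq_of_rootStep_pow_mul_rootBase_eq hodd (i := k + 1) (j := 0) (by omega)
        (by omega) (by rw [h, pow_zero, one_mul])) (by omega)
    · exact absurd (eq_of_rootStep_pow_mul_rootBase_eq hodd (i := k + 1) (j := n + 1) (by omega)
        (by omega) h) (by omega)
  · rintro ⟨⟨j, hj, rfl⟩, hne⟩
    have h0 : j ≠ 0 := by
      rintro rfl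
      exact hne (Or.inl (one_mul _))
    have h1 : j ≠ n + 1 := by
      rintro rfl
      exact hne (Or.inr rfl)
    exact ⟨⟨j - 1, by omega⟩, by rw [Nat.sub_add_cancel (by omega)]⟩

theorem prod_rootStep_pow_succ_mul_rootBase (hodd : Odd n) :
    ∏ k : Fin n, rootStep n ^ ((k : ℕ) + 1) * rootBase n = -1 := by
  have hsum : ∑ j ∈ range n, π * (4 * ((j + 1 : ℕ) : ℝ) - n) / (n + 2) = π * n := by
    rw [← sum_div, ← mul_sum]
    push_cast
    rw [sum_range_four_mul_succ_sub]
    field_simp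
    ring
  rw [Fin.prod_univ_eq_prod_range (fun j => rootStep n ^ (j + 1) * rootBase n)]
  simp_rw [rootStep_pow_mul_rootBase, ← exp_sum, ← mul_sum, ← ofReal_sum, hsum]
  rw [show -I * ((π * n : ℝ) : ℂ) = n * -(π * I) by push_cast; ring, exp_nat_mul, exp_neg,
    exp_pi_mul_I, inv_neg_one, hodd.neg_one_pow]

end RootsOfMinusOne

theorem stmt2_general (n : ℕ) (hodd : Odd n)
    (lam : Fin n → ℝ)
    (hlam : ∀ k : Fin n, lam k = Real.pi * (4 * ((k : ℕ) + 1) - (n : ℝ)) / ((n : ℝ) + 2)) :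
    Function.Injective (fun k : Fin n => Complex.exp (-Complex.I * (lam k : ℝ)))
    ∧ Set.range (fun k : Fin n => Complex.exp (-Complex.I * (lam k : ℝ)))
        = {z : ℂ | z ^ (n + 2) = -1} \
          {Complex.exp (Complex.I * ((Real.pi * n / (n + 2) : ℝ) : ℂ)),
           Complex.exp (-Complex.I * ((Real.pi * n / (n + 2) : ℝ) : ℂ))}
    ∧ ∃ X : Fin n → ℝ,
        (∀ k : Fin n, |X k| = (1 / 2 ^ (n - 1)) *
          ∏ s ∈ Finset.univ.erase k, |Real.sin ((lam s - lam k) / 2)|⁻¹)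
        ∧ ∀ m ∈ Finset.Icc 1 n,
            ∑ k : Fin n, (X k : ℂ) * Complex.exp (-Complex.I * m * (lam k : ℝ))
              = if m = 1 then 1 else 0 := by
  set z : Fin n → ℂ := fun k => exp (-I * (lam k : ℂ)) with hz_def
  have hz : z = fun k : Fin n => rootStep n ^ ((k : ℕ) + 1) * rootBase n := by
    funext k
    show exp (-I * (lam k : ℂ)) = _
    rw [hlam, rootStep_pow_mul_rootBase]
    push_cast
    ring_nf
  have hinj : Function.Injective z := hz ▸ fun i j h =>
    Fin.ext (by simpa using eq_of_rootStep_pow_mul_rootBase_eq hodd (by omega) (by omega) h)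
  have hrange : Set.range z = {w : ℂ | w ^ (n + 2) = -1} \
      {rootBase n, exp (-I * ((π * n / (n + 2) : ℝ) : ℂ))} := by
    rw [hz, range_rootStep_pow_succ_mul_rootBase hodd, rootStep_pow_succ_mul_rootBase]
  obtain ⟨X, hXabs, hXmoment⟩ := exists_real_moment_solution hinj
    (fun k => by simp [hz_def, norm_exp]) (by simpa using hodd)
    (by rw [hz]; exact prod_rootStep_pow_succ_mul_rootBase hodd)
    (fun k => by simpa using (hrange.le (Set.mem_range_self k)).1)
  refine ⟨hinj, hrange, X, fun k => ?_, fun m hm => ?_⟩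
  · have hdist s : ‖z s - z k‖ = 2 * |Real.sin ((lam s - lam k) / 2)| :=
      norm_exp_neg_I_mul_sub (lam s) (lam k)
    simp_rw [hXabs k, hdist, mul_inv, prod_mul_distrib, prod_const,
      card_erase_of_mem (mem_univ k), card_univ, Fintype.card_fin, one_div, inv_pow]
  · rw [← hXmoment m (by simpa using hm)]
    refine sum_congr rfl fun k _ => ?_
    rw [hz_def, ← exp_nat_mul]
    ring_nf

/-- for odd n ≥ 3 and λ_k = π(4k-n)/(n+2), k = 1,…,n (indexed here by
k : Fin n, so the actual index is k+1), the points z_k = e^{-iλ_k} are pairwise distinct,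
they form the set of (n+2)-th roots of -1 minus {e^{iπn/(n+2)}, e^{-iπn/(n+2)}}, and there
exist real amplitudes X_k with the stated moduli realizing the moment conditions for μ = 1. -/
theorem stmt2 (n : ℕ) (hn : 3 ≤ n) (hodd : Odd n)
    (lam : Fin n → ℝ)
    (hlam : ∀ k : Fin n, lam k = Real.pi * (4 * ((k : ℕ) + 1) - (n : ℝ)) / ((n : ℝ) + 2)) :
    Function.Injective (fun k : Fin n => Complex.exp (-Complex.I * (lam k : ℝ)))
    ∧ Set.range (fun k : Fin n => Complex.exp (-Complex.I * (lam k : ℝ)))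
        = {z : ℂ | z ^ (n + 2) = -1} \
          {Complex.exp (Complex.I * ((Real.pi * n / (n + 2) : ℝ) : ℂ)),
           Complex.exp (-Complex.I * ((Real.pi * n / (n + 2) : ℝ) : ℂ))}
    ∧ ∃ X : Fin n → ℝ,
        (∀ k : Fin n, |X k| = (1 / 2 ^ (n - 1)) *
          ∏ s ∈ Finset.univ.erase k, |Real.sin ((lam s - lam k) / 2)|⁻¹)
        ∧ ∀ m ∈ Finset.Icc 1 n,
            ∑ k : Fin n, (X k : ℂ) * Complex.exp (-Complex.I * m * (lam k : ℝ))
              = if m = 1 then 1 else 0 :=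
  stmt2_general n hodd lam hlam
end

section
/- Let n ≥ 1, μ ∈ {1,…,n} and ω ∈ ℝ, and set σ_0 = ω, σ_μ = σ_{−μ} = 1, σ_k = 0 for every other integer k with −(n−1) ≤ k ≤ n. If complex numbers X_1,…,X_n and pairwise distinct complex numbers z_1,…,z_n with |z_j| = 1 satisfy ∑_{j=1}^n X_j z_j^l = σ_l for every integer l with −(n−1) ≤ l ≤ n, then every X_j is real. -/
/-!
On the unit circle `conj z = z⁻¹`, so conjugating the equation of index `-k` turns it into
`∑ conj X_j z_j^k = conj σ_{-k}`. The right-hand side `σ` is real and even, hence this is the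
equation of index `k` with `X` replaced by `conj X`. For `0 ≤ k < n` both equations belong to the
system, so `X - conj X` lies in the kernel of the Vandermonde matrix of the distinct nodes
`z_1, …, z_n`, and therefore vanishes.
-/

open ComplexConjugate

lemma conj_sum_mul_zpow_neg {ι : Type*} (s : Finset ι) (X z : ι → ℂ) (habs : ∀ j, ‖z j‖ = 1)
    (k : ℤ) : conj (∑ j ∈ s, X j * z j ^ (-k)) = ∑ j ∈ s, conj (X j) * z j ^ k := by
  simp only [map_sum, map_mul, map_zpow₀, ← Complex.inv_eq_conj (habs _), inv_zpow', neg_neg]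

theorem im_eq_zero_of_sum_mul_zpow_neg_eq_conj {n : ℕ} {X z : Fin n → ℂ}
    (hz : Function.Injective z) (habs : ∀ j, ‖z j‖ = 1)
    (hsymm : ∀ k : Fin n,
      ∑ j, X j * z j ^ (-(k : ℤ)) = conj (∑ j, X j * z j ^ (k : ℤ))) :
    ∀ j, (X j).im = 0 := by
  have hker : (fun j => X j - conj (X j)) = 0 := by
    refine Matrix.eq_zero_of_forall_pow_sum_mul_pow_eq_zero hz fun k => ?_
    have hconj : ∑ j, conj (X j) * z j ^ (k : ℕ) = ∑ j, X j * z j ^ (k : ℕ) := by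
      have h := congrArg conj (hsymm k)
      rw [conj_sum_mul_zpow_neg _ _ _ habs, Complex.conj_conj] at h
      simpa only [zpow_natCast] using h
    simp only [sub_mul, Finset.sum_sub_distrib, hconj, sub_self]
  intro j
  exact Complex.conj_eq_iff_im.mp (sub_eq_zero.mp (congrFun hker j)).symm

/-- The right-hand side `σ_l` of the full moment system. -/
def fullMoment (ω : ℝ) (μ : ℕ) (l : ℤ) : ℂ :=
  if l = 0 then (ω : ℂ) else if l = μ ∨ l = -(μ : ℤ) then 1 else 0

lemma fullMoment_neg (ω : ℝ) (μ : ℕ) (l : ℤ) : fullMoment ω μ (-l) = fullMoment ω μ l := by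
  unfold fullMoment
  split_ifs <;> first | rfl | omega

lemma conj_fullMoment (ω : ℝ) (μ : ℕ) (l : ℤ) : conj (fullMoment ω μ l) = fullMoment ω μ l := by
  unfold fullMoment
  split_ifs <;> simp

theorem stmt3_general (n : ℕ) (μ : ℕ) (ω : ℝ)
    (X : Fin n → ℂ) (z : Fin n → ℂ)
    (hz : Function.Injective z) (habs : ∀ j, ‖z j‖ = 1)
    (hmom : ∀ l : ℤ, -((n : ℤ) - 1) ≤ l → l ≤ n →
      ∑ j : Fin n, X j * z j ^ l =
        if l = 0 then (ω : ℂ) else if l = μ ∨ l = -(μ : ℤ) then 1 else 0) :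
    ∀ j, (X j).im = 0 := by
  refine im_eq_zero_of_sum_mul_zpow_neg_eq_conj hz habs fun k => ?_
  have hk := k.isLt
  have hpos : ∑ j, X j * z j ^ (k : ℤ) = fullMoment ω μ k := hmom k (by omega) (by omega)
  have hneg : ∑ j, X j * z j ^ (-(k : ℤ)) = fullMoment ω μ (-k) := hmom (-k) (by omega) (by omega)
  rw [hneg, hpos, fullMoment_neg, conj_fullMoment]

/-- in the full moment system with pairwise distinct unimodular nodes, the
amplitudes X_j are automatically real. -/
theorem stmt3 (n : ℕ) (hn : 1 ≤ n) (μ : ℕ) (hμ : μ ∈ Finset.Icc 1 n) (ω : ℝ)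
    (X : Fin n → ℂ) (z : Fin n → ℂ)
    (hz : Function.Injective z) (habs : ∀ j, ‖z j‖ = 1)
    (hmom : ∀ l : ℤ, -((n : ℤ) - 1) ≤ l → l ≤ n →
      ∑ j : Fin n, X j * z j ^ l =
        if l = 0 then (ω : ℂ) else if l = μ ∨ l = -(μ : ℤ) then 1 else 0) :
    ∀ j, (X j).im = 0 :=
  stmt3_general n μ ω X z hz habs hmom
end

section
/- Let n ≥ 1 and let z_1,…,z_n, Z_1,…,Z_n be arbitrary complex numbers; put ω_l := ∑_{k=1}^n Z_k z_k^l for l = 0,…,2n−1. For z ∈ ℂ let M(z) be the (n+1)×(n+1) matrix whose first row is (1, z, z², …, z^n) and whose remaining rows, indexed by i = 1,…,n, have entry ω_{i−1+j} in column j (columns indexed j = 0,…,n). Then det M(z) = (−1)^n ∏_{k=1}^n Z_k · ∏_{1≤k<j≤n} (z_k − z_j)² · ∏_{k=1}^n (z − z_k) for every z ∈ ℂ. -/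
open Matrix Finset

/-- factorization of the Prony generating determinant
det M(z) = (-1)^n ∏ Z_k · ∏_{k<j}(z_k - z_j)² · ∏ (z - z_k). -/
theorem stmt4 (n : ℕ) (hn : 1 ≤ n) (z Z : Fin n → ℂ) (w : ℂ) :
    Matrix.det (Matrix.of fun i j : Fin (n + 1) =>
      if (i : ℕ) = 0 then w ^ (j : ℕ)
      else ∑ k : Fin n, Z k * z k ^ ((i : ℕ) - 1 + (j : ℕ)))
    = (-1) ^ n * (∏ k : Fin n, Z k)
        * (∏ k : Fin n, ∏ j ∈ Finset.Ioi k, (z k - z j) ^ 2)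
        * ∏ k : Fin n, (w - z k) := by
  classical
  set v : Fin (n + 1) → ℂ := Fin.cons w z with hv
  -- the bordered coefficient matrix
  set P : Matrix (Fin (n + 1)) (Fin (n + 1)) ℂ :=
    Matrix.of fun i k : Fin (n + 1) =>
      Fin.cases (Fin.cases (1 : ℂ) (fun _ => 0) k)
        (fun i' => Fin.cases 0 (fun k' => Z k' * z k' ^ (i' : ℕ)) k) i with hP
  have key : (Matrix.of fun i j : Fin (n + 1) =>
      if (i : ℕ) = 0 then w ^ (j : ℕ)
      else ∑ k : Fin n, Z k * z k ^ ((i : ℕ) - 1 + (j : ℕ)))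
      = P * Matrix.vandermonde v := by
    ext i j
    rw [Matrix.mul_apply]
    refine Fin.cases ?_ ?_ i
    · rw [Fin.sum_univ_succ]
      simp [hP, Matrix.vandermonde, hv]
    · intro i'
      rw [Fin.sum_univ_succ]
      simp only [hP, Matrix.of_apply, Fin.cases_succ, Fin.cases_zero, zero_mul, zero_add,
        Matrix.vandermonde, hv, Fin.cons_succ, Fin.val_succ, Nat.succ_sub_one,
        Nat.add_eq_zero, Nat.succ_ne_zero, false_and, if_false]
      refine Finset.sum_congr rfl fun k _ => ?_
      rw [mul_assoc, ← pow_add]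
  rw [key, Matrix.det_mul, Matrix.det_vandermonde]
  -- determinant of P
  have hdetP : P.det = (∏ k : Fin n, Z k) * ∏ i : Fin n, ∏ j ∈ Finset.Ioi i, (z j - z i) := by
    rw [Matrix.det_succ_row_zero, Fin.sum_univ_succ]
    have h0 : ∀ j : Fin n, P 0 j.succ = 0 := by intro j; simp [hP]
    simp only [h0, mul_zero, zero_mul, Finset.sum_const_zero, add_zero]
    have h00 : P 0 0 = 1 := by simp [hP]
    rw [h00, Fin.succAbove_zero]
    have hsub : (P.submatrix Fin.succ Fin.succ)
        = Matrix.of fun i k : Fin n => Z k * (z k ^ (i : ℕ)) := by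
      ext i k; simp [hP, Matrix.submatrix_apply]
    rw [hsub]
    have := Matrix.det_mul_row Z (Matrix.of fun i k : Fin n => z k ^ (i : ℕ))
    simp only [Matrix.of_apply] at this ⊢
    rw [this]
    have hT : (Matrix.of fun i k : Fin n => z k ^ (i : ℕ))
        = (Matrix.vandermonde z).transpose := by
      ext i k; simp [Matrix.vandermonde]
    rw [hT, Matrix.det_transpose, Matrix.det_vandermonde]
    simp
  rw [hdetP]
  -- split the Vandermonde product over Fin (n+1)
  have hsplit : (∏ i : Fin (n + 1), ∏ j ∈ Finset.Ioi i, (v j - v i))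
      = (∏ k : Fin n, (z k - w)) * ∏ i : Fin n, ∏ j ∈ Finset.Ioi i, (z j - z i) := by
    rw [Fin.prod_univ_succ]
    congr 1
    · rw [Fin.prod_Ioi_zero]
      exact Finset.prod_congr rfl fun k _ => by simp [hv]
    · refine Finset.prod_congr rfl fun i _ => ?_
      rw [Fin.prod_Ioi_succ]
      exact Finset.prod_congr rfl fun j _ => by simp [hv]
  rw [hsplit]
  -- final algebra
  have h1 : (∏ k : Fin n, (z k - w)) = (-1) ^ n * ∏ k : Fin n, (w - z k) := by
    have : ∀ k : Fin n, z k - w = (-1) * (w - z k) := fun k => by ring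
    simp_rw [this, Finset.prod_mul_distrib, Finset.prod_const, Finset.card_univ,
      Fintype.card_fin]
  have h2 : (∏ i : Fin n, ∏ j ∈ Finset.Ioi i, (z j - z i))
      * (∏ i : Fin n, ∏ j ∈ Finset.Ioi i, (z j - z i))
      = ∏ k : Fin n, ∏ j ∈ Finset.Ioi k, (z k - z j) ^ 2 := by
    rw [← Finset.prod_mul_distrib]
    refine Finset.prod_congr rfl fun i _ => ?_
    rw [← Finset.prod_mul_distrib]
    exact Finset.prod_congr rfl fun j _ => by ring
  calc ((∏ k : Fin n, Z k) * ∏ i : Fin n, ∏ j ∈ Finset.Ioi i, (z j - z i))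
        * ((∏ k : Fin n, (z k - w)) * ∏ i : Fin n, ∏ j ∈ Finset.Ioi i, (z j - z i))
      = (∏ k : Fin n, (z k - w)) * (∏ k : Fin n, Z k)
        * ((∏ i : Fin n, ∏ j ∈ Finset.Ioi i, (z j - z i))
          * (∏ i : Fin n, ∏ j ∈ Finset.Ioi i, (z j - z i))) := by ring
    _ = _ := by rw [h1, h2]; ring
end

section
/- Let n ≥ 1 and let 1 ≤ m ≤ n, 1 ≤ m' ≤ n. Suppose Z_1,…,Z_m and Z'_1,…,Z'_{m'} are nonzero complex numbers, z_1,…,z_m are pairwise distinct complex numbers, and z'_1,…,z'_{m'} are pairwise distinct complex numbers, such that ∑_{k=1}^m Z_k z_k^l = ∑_{k=1}^{m'} Z'_k (z'_k)^l for every l = 0,…,2n−1. Then m = m' and there is a permutation π of {1,…,m} with z'_{π(k)} = z_k and Z'_{π(k)} = Z_k for all k. -/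
open Polynomial Finset

/-- If a finitely supported "measure" on a finite set `s` has vanishing power moments
for all exponents `l < s.card`, then all its weights vanish. -/
lemma moment_vanish (s : Finset ℂ) (c : ℂ → ℂ)
    (h : ∀ l < s.card, ∑ x ∈ s, c x * x ^ l = 0) : ∀ x ∈ s, c x = 0 := by
  intro x0 hx0
  set p : Polynomial ℂ := ∏ y ∈ s.erase x0, (X - C y) with hp
  have hdeg : p.natDegree = (s.erase x0).card := by
    rw [hp, Polynomial.natDegree_prod]
    · simp [Polynomial.natDegree_X_sub_C]
    · intro y _; exact Polynomial.X_sub_C_ne_zero y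
  have hdlt : p.natDegree < s.card := by
    rw [hdeg]; exact Finset.card_erase_lt_of_mem hx0
  have key : ∑ x ∈ s, c x * p.eval x = 0 := by
    have h1 : ∀ x ∈ s, c x * p.eval x
        = ∑ i ∈ Finset.range (p.natDegree + 1), p.coeff i * (c x * x ^ i) := by
      intro x _
      rw [Polynomial.eval_eq_sum_range, Finset.mul_sum]
      exact Finset.sum_congr rfl fun i _ => by ring
    rw [Finset.sum_congr rfl h1, Finset.sum_comm]
    apply Finset.sum_eq_zero
    intro i hi
    have hilt : i < s.card := lt_of_le_of_lt (Nat.lt_succ_iff.mp (Finset.mem_range.mp hi)) hdlt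
    rw [← Finset.mul_sum, h i hilt, mul_zero]
  have key2 : ∑ x ∈ s, c x * p.eval x = c x0 * p.eval x0 := by
    apply Finset.sum_eq_single_of_mem x0 hx0
    intro x hx hne
    have : p.eval x = 0 := by
      rw [hp, Polynomial.eval_prod]
      exact Finset.prod_eq_zero (Finset.mem_erase.mpr ⟨hne, hx⟩) (by simp)
    simp [this]
  have hne : p.eval x0 ≠ 0 := by
    rw [hp, Polynomial.eval_prod]
    apply Finset.prod_ne_zero_iff.mpr
    intro y hy
    simp only [Polynomial.eval_sub, Polynomial.eval_X, Polynomial.eval_C]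
    exact sub_ne_zero.mpr (Ne.symm (Finset.mem_erase.mp hy).1)
  have : c x0 * p.eval x0 = 0 := by rw [← key2, key]
  rcases mul_eq_zero.mp this with h | h
  · exact h
  · exact absurd h hne

/-- uniqueness of discrete moment representations with at most n terms,
nonzero weights and pairwise distinct nodes, given agreement of moments l = 0,…,2n-1. -/
theorem stmt5 (n m m' : ℕ) (hm1 : 1 ≤ m) (hmn : m ≤ n) (hm'1 : 1 ≤ m') (hm'n : m' ≤ n)
    (Z : Fin m → ℂ) (Z' : Fin m' → ℂ) (z : Fin m → ℂ) (z' : Fin m' → ℂ)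
    (hZ : ∀ k, Z k ≠ 0) (hZ' : ∀ k, Z' k ≠ 0)
    (hz : Function.Injective z) (hz' : Function.Injective z')
    (hmom : ∀ l < 2 * n, ∑ k : Fin m, Z k * z k ^ l = ∑ k : Fin m', Z' k * z' k ^ l) :
    m = m' ∧ ∃ e : Fin m ≃ Fin m', ∀ k, z' (e k) = z k ∧ Z' (e k) = Z k := by
  set s : Finset ℂ := (Finset.univ.image z) ∪ (Finset.univ.image z') with hs
  have hzmem : ∀ k, z k ∈ s := fun k =>
    Finset.mem_union_left _ (Finset.mem_image_of_mem z (Finset.mem_univ k))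
  have hz'mem : ∀ k, z' k ∈ s :=
    fun k => Finset.mem_union_right _ (Finset.mem_image_of_mem z' (Finset.mem_univ k))
  have hscard : s.card ≤ 2 * n := by
    calc s.card ≤ (Finset.univ.image z).card + (Finset.univ.image z').card :=
          Finset.card_union_le _ _
      _ ≤ m + m' := add_le_add
          (Finset.card_image_le.trans (by simp)) (Finset.card_image_le.trans (by simp))
      _ ≤ 2 * n := by omega
  set c : ℂ → ℂ := fun x =>
    (∑ k ∈ Finset.univ.filter (fun k => z k = x), Z k)
      - (∑ k ∈ Finset.univ.filter (fun k => z' k = x), Z' k) with hcdef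
  have hfib : ∀ l : ℕ,
      ∑ x ∈ s, (∑ k ∈ Finset.univ.filter (fun k => z k = x), Z k) * x ^ l
        = ∑ k : Fin m, Z k * z k ^ l := by
    intro l
    rw [← Finset.sum_fiberwise_of_maps_to (fun k _ => hzmem k) (fun k => Z k * z k ^ l)]
    apply Finset.sum_congr rfl
    intro x _
    rw [Finset.sum_mul]
    apply Finset.sum_congr rfl
    intro k hk
    rw [(Finset.mem_filter.mp hk).2]
  have hfib' : ∀ l : ℕ,
      ∑ x ∈ s, (∑ k ∈ Finset.univ.filter (fun k => z' k = x), Z' k) * x ^ l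
        = ∑ k : Fin m', Z' k * z' k ^ l := by
    intro l
    rw [← Finset.sum_fiberwise_of_maps_to (fun k _ => hz'mem k) (fun k => Z' k * z' k ^ l)]
    apply Finset.sum_congr rfl
    intro x _
    rw [Finset.sum_mul]
    apply Finset.sum_congr rfl
    intro k hk
    rw [(Finset.mem_filter.mp hk).2]
  have hc0 : ∀ x ∈ s, c x = 0 := by
    apply moment_vanish
    intro l hl
    have hl2 : l < 2 * n := lt_of_lt_of_le hl hscard
    simp only [hcdef, sub_mul]
    rw [Finset.sum_sub_distrib, hfib l, hfib' l, hmom l hl2, sub_self]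
  -- For each k, the weight at `z k` from the first family is exactly `Z k`.
  have hsingle : ∀ k : Fin m, (Finset.univ.filter (fun j => z j = z k)) = {k} := by
    intro k; ext j; simp [hz.eq_iff]
  have hsingle' : ∀ k : Fin m', (Finset.univ.filter (fun j => z' j = z' k)) = {k} := by
    intro k; ext j; simp [hz'.eq_iff]
  have hex : ∀ k : Fin m, ∃ j : Fin m', z' j = z k ∧ Z' j = Z k := by
    intro k
    have h0 := hc0 (z k) (hzmem k)
    rw [hcdef] at h0
    simp only [hsingle k, Finset.sum_singleton, sub_eq_zero] at h0
    -- h0 : Z k = ∑ j ∈ filter (z' · = z k), Z' j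
    have hne : (Finset.univ.filter (fun j => z' j = z k)).Nonempty := by
      by_contra hemp
      rw [Finset.not_nonempty_iff_eq_empty.mp hemp, Finset.sum_empty] at h0
      exact hZ k h0
    obtain ⟨j, hj⟩ := hne
    have hjz : z' j = z k := (Finset.mem_filter.mp hj).2
    refine ⟨j, hjz, ?_⟩
    have : (Finset.univ.filter (fun j' => z' j' = z k)) = {j} := by
      ext j'
      simp only [Finset.mem_filter, Finset.mem_univ, true_and, Finset.mem_singleton]
      constructor
      · intro h; exact hz' (h.trans hjz.symm)
      · intro h; rw [h]; exact hjz
    rw [this, Finset.sum_singleton] at h0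
    exact h0.symm
  have hex' : ∀ j : Fin m', ∃ k : Fin m, z k = z' j := by
    intro j
    have h0 := hc0 (z' j) (hz'mem j)
    rw [hcdef] at h0
    simp only [hsingle' j, Finset.sum_singleton, sub_eq_zero] at h0
    have hne : (Finset.univ.filter (fun k => z k = z' j)).Nonempty := by
      by_contra hemp
      rw [Finset.not_nonempty_iff_eq_empty.mp hemp, Finset.sum_empty] at h0
      exact hZ' j h0.symm
    obtain ⟨k, hk⟩ := hne
    exact ⟨k, (Finset.mem_filter.mp hk).2⟩
  choose f hf1 hf2 using hex
  have hbij : Function.Bijective f := by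
    constructor
    · intro k1 k2 h
      apply hz
      rw [← hf1 k1, ← hf1 k2, h]
    · intro j
      obtain ⟨k, hk⟩ := hex' j
      refine ⟨k, hz' ?_⟩
      rw [hf1 k, hk]
  refine ⟨?_, Equiv.ofBijective f hbij, fun k => ⟨hf1 k, hf2 k⟩⟩
  simpa using Fintype.card_congr (Equiv.ofBijective f hbij)
end

section
/- Let n ≥ 1, μ ∈ {1,…,n} and ω ∈ ℝ, and let G_n(ω,μ;z) = ∑_{k=0}^n g_k(ω) z^k be the generating polynomial. Then for every q = 0,…,μ−1 and every integer k ≥ 0 with q + μk ≤ n, one has g_{q+μk}(ω) = g_q(ω) · r_k(ω). -/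
/-- σ_k: σ_0 = ω, σ_{±μ} = 1, σ_k = 0 otherwise. -/
noncomputable def sig (μ : ℕ) (ω : ℝ) : ℤ → ℂ :=
  fun l => if l = 0 then (ω : ℂ) else if l = (μ : ℤ) ∨ l = -(μ : ℤ) then 1 else 0

/-- The (n+1)×(n+1) matrix defining the generating polynomial G_n(ω,μ;z): first row
(1, z, …, z^n), and row i (1 ≤ i ≤ n) has entry σ_{j-n+i} in column j. -/
noncomputable def Gmat (n μ : ℕ) (ω : ℝ) : Matrix (Fin (n + 1)) (Fin (n + 1)) (Polynomial ℂ) :=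
  Matrix.of fun i j =>
    if (i : ℕ) = 0 then Polynomial.X ^ (j : ℕ)
    else Polynomial.C (sig μ ω ((j : ℤ) - (n : ℤ) + (i : ℤ)))

/-- The generating polynomial G_n(ω,μ;·) as a polynomial in z. -/
noncomputable def Gpoly (n μ : ℕ) (ω : ℝ) : Polynomial ℂ := (Gmat n μ ω).det

/-- Its coefficients g_k(ω). -/
noncomputable def gcoef (n μ : ℕ) (ω : ℝ) (k : ℕ) : ℂ := (Gpoly n μ ω).coeff k

/-- r_{-1} = 0, r_0 = 1, r_k(ω) = -ω r_{k-1}(ω) - r_{k-2}(ω); r_k(ω) = (-1)^k U_k(ω/2). -/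
def chebr : ℕ → ℝ → ℝ
  | 0 => fun _ => 1
  | 1 => fun ω => -ω
  | (k + 2) => fun ω => -ω * chebr (k + 1) ω - chebr k ω

/-- Minor of `Gmat` obtained by deleting row 0 and column `j`, as a complex matrix. -/
noncomputable def Dmat (n μ : ℕ) (ω : ℝ) (j : Fin (n + 1)) : Matrix (Fin n) (Fin n) ℂ :=
  Matrix.of fun i' j' =>
    sig μ ω (((j.succAbove j' : Fin (n + 1)) : ℤ) - (n : ℤ) + ((i'.succ : Fin (n + 1)) : ℤ))

lemma minor_det (n μ : ℕ) (ω : ℝ) (j : Fin (n + 1)) :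
    ((Gmat n μ ω).submatrix Fin.succ j.succAbove).det = Polynomial.C ((Dmat n μ ω j).det) := by
  rw [RingHom.map_det]
  congr 1

lemma gcoef_fin (n μ : ℕ) (ω : ℝ) (j : Fin (n + 1)) :
    gcoef n μ ω (j : ℕ) = (-1) ^ (j : ℕ) * (Dmat n μ ω j).det := by
  unfold gcoef Gpoly
  rw [Matrix.det_succ_row_zero, Polynomial.finset_sum_coeff]
  have hterm : ∀ j' : Fin (n + 1),
      ((-1) ^ (j' : ℕ) * Gmat n μ ω 0 j' *
        ((Gmat n μ ω).submatrix Fin.succ j'.succAbove).det).coeff (j : ℕ)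
      = if j' = j then (-1) ^ (j' : ℕ) * (Dmat n μ ω j').det else 0 := by
    intro j'
    rw [minor_det]
    have h0 : Gmat n μ ω 0 j' = Polynomial.X ^ (j' : ℕ) := by simp [Gmat]
    have hC : ((-1 : Polynomial ℂ)) ^ (j' : ℕ) = Polynomial.C ((-1 : ℂ) ^ (j' : ℕ)) := by
      simp
    rw [h0, hC, mul_comm (Polynomial.C ((-1 : ℂ) ^ (j' : ℕ))) (Polynomial.X ^ (j' : ℕ)),
      mul_assoc, ← Polynomial.C_mul, mul_comm (Polynomial.X ^ (j' : ℕ)),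
      Polynomial.coeff_C_mul_X_pow]
    exact if_congr (by rw [Fin.val_inj, eq_comm]) rfl rfl
  rw [Finset.sum_congr rfl fun j' _ => hterm j', Finset.sum_ite_eq' Finset.univ j
    (fun j' => (-1) ^ (j' : ℕ) * (Dmat n μ ω j').det)]
  simp

lemma key (n μ : ℕ) (ω : ℝ) (i : Fin (n + 1)) (hi : i ≠ 0) :
    ∑ j : Fin (n + 1), sig μ ω ((j : ℤ) - n + (i : ℤ)) * gcoef n μ ω (j : ℕ) = 0 := by
  set N := (Gmat n μ ω).updateRow 0
    (fun j => Polynomial.C (sig μ ω ((j : ℤ) - n + (i : ℤ)))) with hN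
  have hrow : N 0 = N i := by
    rw [hN, Matrix.updateRow_self, Matrix.updateRow_ne hi]
    funext j
    simp only [Gmat, Matrix.of_apply]
    have hv : ¬((i : ℕ) = 0) := by
      intro h
      exact hi (Fin.ext (by simpa using h))
    rw [if_neg hv]
  have hdet : N.det = 0 := Matrix.det_zero_of_row_eq hi.symm hrow
  have hexp := Matrix.det_succ_row_zero N
  rw [hdet] at hexp
  have hsub : ∀ j : Fin (n + 1),
      (N.submatrix Fin.succ j.succAbove).det = Polynomial.C ((Dmat n μ ω j).det) := by
    intro j
    rw [← minor_det]
    congr 1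
  have hterm : ∀ j : Fin (n + 1),
      (-1) ^ (j : ℕ) * N 0 j * (N.submatrix Fin.succ j.succAbove).det
      = Polynomial.C (sig μ ω ((j : ℤ) - n + (i : ℤ)) * ((-1) ^ (j : ℕ) * (Dmat n μ ω j).det)) := by
    intro j
    rw [hsub j]
    have h0 : N 0 j = Polynomial.C (sig μ ω ((j : ℤ) - n + (i : ℤ))) := by
      simp [hN]
    rw [h0]
    have hC : ((-1 : Polynomial ℂ)) ^ (j : ℕ) = Polynomial.C ((-1 : ℂ) ^ (j : ℕ)) := by simp
    rw [hC, ← Polynomial.C_mul, ← Polynomial.C_mul]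
    congr 1
    ring
  have hsum := Finset.sum_congr (rfl : (Finset.univ : Finset (Fin (n + 1))) = Finset.univ)
    fun j _ => hterm j
  rw [hsum, ← map_sum] at hexp
  have hz : (0 : ℂ) = ∑ j : Fin (n + 1),
      sig μ ω ((j : ℤ) - n + (i : ℤ)) * ((-1) ^ (j : ℕ) * (Dmat n μ ω j).det) := by
    rwa [← Polynomial.C_0, Polynomial.C_inj] at hexp
  calc ∑ j : Fin (n + 1), sig μ ω ((j : ℤ) - n + (i : ℤ)) * gcoef n μ ω (j : ℕ)
      = ∑ j : Fin (n + 1), sig μ ω ((j : ℤ) - n + (i : ℤ)) * ((-1) ^ (j : ℕ) * (Dmat n μ ω j).det) :=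
        Finset.sum_congr rfl fun j _ => by rw [gcoef_fin]
    _ = 0 := hz.symm

lemma rel (n μ : ℕ) (ω : ℝ) (hμ1 : 1 ≤ μ) (m : ℕ) (hm : m < n) :
    (ω : ℂ) * gcoef n μ ω m + (if m + μ ≤ n then gcoef n μ ω (m + μ) else 0)
      + (if μ ≤ m then gcoef n μ ω (m - μ) else 0) = 0 := by
  have hi : (⟨n - m, by omega⟩ : Fin (n + 1)) ≠ 0 := by
    intro h
    simp only [Fin.ext_iff, Fin.val_mk, Fin.val_zero] at h
    omega
  have hk := key n μ ω ⟨n - m, by omega⟩ hi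
  have hcast : ((⟨n - m, by omega⟩ : Fin (n + 1)) : ℤ) = (n : ℤ) - m := by
    simp only [Fin.val_mk]
    omega
  rw [hcast] at hk
  rw [Fin.sum_univ_eq_sum_range (fun j => sig μ ω ((j : ℤ) - n + ((n : ℤ) - m)) * gcoef n μ ω j)]
    at hk
  have hterm : ∀ j ∈ Finset.range (n + 1),
      sig μ ω ((j : ℤ) - n + ((n : ℤ) - m)) * gcoef n μ ω j
      = (if j = m then (ω : ℂ) * gcoef n μ ω m else 0)
        + (if j = m + μ then gcoef n μ ω (m + μ) else 0)
        + (if j + μ = m then gcoef n μ ω (m - μ) else 0) := by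
    intro j _
    rcases eq_or_ne j m with h | h
    · subst h
      have : (j : ℤ) - n + ((n : ℤ) - j) = 0 := by ring
      rw [this]
      rw [if_pos rfl, if_neg (by omega), if_neg (by omega)]
      simp [sig]
    · rcases eq_or_ne j (m + μ) with h2 | h2
      · subst h2
        have : ((m + μ : ℕ) : ℤ) - n + ((n : ℤ) - m) = (μ : ℤ) := by push_cast; ring
        rw [this]
        rw [if_neg (by omega), if_pos rfl, if_neg (by omega)]
        have : sig μ ω (μ : ℤ) = 1 := by
          unfold sig
          rw [if_neg (by omega : ¬((μ : ℤ) = 0))]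
          simp
        rw [this]; ring
      · rcases eq_or_ne (j + μ) m with h3 | h3
        · have hj : j = m - μ := by omega
          have : (j : ℤ) - n + ((n : ℤ) - m) = -(μ : ℤ) := by omega
          rw [this]
          rw [if_neg h, if_neg h2, if_pos h3]
          have : sig μ ω (-(μ : ℤ)) = 1 := by
            unfold sig
            rw [if_neg (by omega : ¬(-(μ : ℤ) = 0))]
            simp
          rw [this, hj]; ring
        · have : sig μ ω ((j : ℤ) - n + ((n : ℤ) - m)) = 0 := by
            simp only [sig]
            rw [if_neg (by omega), if_neg (by omega)]
          rw [this, if_neg h, if_neg h2, if_neg h3]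
          ring
  have hsum := Finset.sum_congr (rfl : Finset.range (n + 1) = Finset.range (n + 1)) hterm
  rw [hsum] at hk
  rw [Finset.sum_add_distrib, Finset.sum_add_distrib] at hk
  rw [Finset.sum_ite_eq' (Finset.range (n + 1)) m (fun _ => (ω : ℂ) * gcoef n μ ω m),
    Finset.sum_ite_eq' (Finset.range (n + 1)) (m + μ) (fun _ => gcoef n μ ω (m + μ))] at hk
  have h3 : (∑ j ∈ Finset.range (n + 1), if j + μ = m then gcoef n μ ω (m - μ) else 0)
      = if μ ≤ m then gcoef n μ ω (m - μ) else 0 := by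
    by_cases hμm : μ ≤ m
    · rw [Finset.sum_congr rfl (fun j _ => if_congr (by omega : j + μ = m ↔ j = m - μ) rfl rfl),
        Finset.sum_ite_eq' (Finset.range (n + 1)) (m - μ) (fun _ => gcoef n μ ω (m - μ)),
        if_pos (Finset.mem_range.mpr (by omega)), if_pos hμm]
    · rw [if_neg hμm]
      apply Finset.sum_eq_zero
      intro j _
      rw [if_neg (by omega)]
  rw [h3, if_pos (Finset.mem_range.mpr (by omega))] at hk
  have hif : (if m + μ ∈ Finset.range (n + 1) then gcoef n μ ω (m + μ) else 0)
      = if m + μ ≤ n then gcoef n μ ω (m + μ) else 0 := by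
    simp [Finset.mem_range, Nat.lt_succ_iff]
  rw [hif] at hk
  exact hk

/-- recurrence structure of the coefficients of the generating polynomial:
g_{q+μk}(ω) = g_q(ω) · r_k(ω). -/
theorem stmt7 (n μ : ℕ) (hn : 1 ≤ n) (hμ : μ ∈ Finset.Icc 1 n) (ω : ℝ)
    (q k : ℕ) (hq : q < μ) (hk : q + μ * k ≤ n) :
    gcoef n μ ω (q + μ * k) = gcoef n μ ω q * ((chebr k ω : ℝ) : ℂ) := by
  rw [Finset.mem_Icc] at hμ
  obtain ⟨hμ1, hμn⟩ := hμ
  induction k using Nat.twoStepInduction with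
  | zero =>
    simp [chebr]
  | one =>
    have hmo : μ * 1 = μ := mul_one μ
    have hrel := rel n μ ω hμ1 q (by omega)
    rw [if_pos (by omega), if_neg (by omega)] at hrel
    have : q + μ * 1 = q + μ := by ring
    rw [this]
    have : gcoef n μ ω (q + μ) = -(ω : ℂ) * gcoef n μ ω q := by linear_combination hrel
    rw [this]
    simp [chebr]
    ring
  | more k ih1 ih2 =>
    have e0 : μ * (k + 1) = μ * k + μ := by ring
    have e0' : μ * (k + 2) = μ * (k + 1) + μ := by ring
    have h1 : q + μ * k ≤ n := by omega
    have h2 : q + μ * (k + 1) ≤ n := by omega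
    have ih1' := ih1 h1
    have ih2' := ih2 h2
    have hrel := rel n μ ω hμ1 (q + μ * (k + 1)) (by omega)
    have e1 : q + μ * (k + 1) + μ = q + μ * (k + 2) := by ring
    have e2 : q + μ * (k + 1) - μ = q + μ * k := by omega
    rw [if_pos (by omega), if_pos (by omega), e1, e2] at hrel
    have : gcoef n μ ω (q + μ * (k + 2)) =
        -(ω : ℂ) * gcoef n μ ω (q + μ * (k + 1)) - gcoef n μ ω (q + μ * k) := by
      linear_combination hrel
    rw [this, ih1', ih2']
    have : chebr (k + 2) ω = -ω * chebr (k + 1) ω - chebr k ω := rfl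
    rw [this]
    push_cast
    ring
end

section
/- Let s ≥ 2 and ω ∈ ℝ. The polynomial R_{s−1}(ω;t) = ∑_{k=0}^{s−1} r_k(ω) t^k has degree s−1 and s−1 pairwise distinct roots all of modulus 1 if and only if r_s(ω) = 0, i.e. if and only if ω ∈ Ω_s = {2cos(πα/(s+1)) : α = 1,…,s}. Moreover, for ω = −2cos φ_α with φ_α = πα/(s+1) and α ∈ {1,…,s}, the set of roots of R_{s−1}(ω;t) equals {t ∈ ℂ : t^{s+1} = (−1)^α} \ {e^{iφ_α}, e^{−iφ_α}}. -/
/-- ℛ_{s-1}(ω;t) = ∑_{k=0}^{s-1} r_k(ω) t^k, as a complex polynomial in t. -/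
noncomputable def Rpoly (s : ℕ) (ω : ℝ) : Polynomial ℂ :=
  ∑ k ∈ Finset.range s, Polynomial.C ((chebr k ω : ℝ) : ℂ) * Polynomial.X ^ k

/-!
For `ω = -2 cos φ` one has `r_k(ω) sin φ = sin ((k + 1) φ)`, i.e. `r_k(-2x) = U_k(x)`. Hence the
zeros of `r_s` are the points `-2 cos (πα/(s+1))`, `α = 1, …, s`, which form `Ω_s` again under
`α ↦ s + 1 - α`. At `φ = πα/(s+1)` also `r_{s-1}(ω) = -(-1)^α`, and the telescoping identity
`(t² + ωt + 1) R_{s-1}(ω;t) = 1 - r_s t^s + r_{s-1} t^{s+1}` becomes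
`(t - e^{iφ}) (t - e^{-iφ}) R_{s-1}(ω;t) = -(-1)^α (t^{s+1} - (-1)^α)`.
So the roots of `R_{s-1}` are the `(s+1)`-st roots of `(-1)^α` other than `e^{±iφ}`: distinct
and of modulus one.

Conversely, if all roots of `R_{s-1}` have modulus one then `1/t = conj t` on them, so the
reversal of `R_{s-1}` times `r_{s-1}` is its coefficientwise conjugate, i.e. `R_{s-1}` itself.
Comparing the two lowest coefficients gives `r_{s-1}² = 1` and `r_{s-1} r_{s-2} = -ω`, whence
`r_s = -ω r_{s-1} - r_{s-2} = 0`.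
-/

open Polynomial Real

namespace Polynomial

theorem reverse_X_sub_C_of_norm_eq_one {a : ℂ} (ha : ‖a‖ = 1) :
    (X - C a).reverse = C (-a) * (X - C (starRingEnd ℂ a)) := by
  have hconj : a * starRingEnd ℂ a = 1 := by
    rw [Complex.mul_conj, Complex.normSq_eq_norm_sq, ha]; simp
  have hX : (X : ℂ[X]).reverse = 1 := by
    have h := reverse_mul_X (C (1 : ℂ))
    rwa [reverse_C, C_1, one_mul] at h
  rw [sub_eq_add_neg, ← C_neg, reverse_add_C, hX, natDegree_X, pow_one, mul_sub,
    ← C_mul, neg_mul, hconj]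
  simp only [C_neg, C_1]
  ring

theorem reverse_prod_X_sub_C_of_norm_eq_one (S : Multiset ℂ) (hS : ∀ a ∈ S, ‖a‖ = 1) :
    (S.map (X - C ·)).prod.reverse
      = C (S.map (- ·)).prod * (S.map (X - C ·)).prod.map (starRingEnd ℂ) := by
  induction S using Multiset.induction_on with
  | empty => simpa using reverse_C (1 : ℂ)
  | cons a S ih =>
    simp only [Multiset.mem_cons, forall_eq_or_imp] at hS
    simp only [Multiset.map_cons, Multiset.prod_cons, reverse_mul_of_domain,
      reverse_X_sub_C_of_norm_eq_one hS.1, ih hS.2, Polynomial.map_mul, Polynomial.map_sub,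
      map_X, map_C, C_mul]
    ring

theorem C_conj_leadingCoeff_mul_reverse {p : ℂ[X]} (hp : ∀ a ∈ p.roots, ‖a‖ = 1) :
    C (starRingEnd ℂ p.leadingCoeff) * p.reverse = C (p.coeff 0) * p.map (starRingEnd ℂ) := by
  have hp_eq := (IsAlgClosed.splits p).eq_prod_roots
  generalize p.roots = S at hp hp_eq
  generalize p.leadingCoeff = L at hp_eq ⊢
  subst hp_eq
  have hcoeff : (C L * (S.map (X - C ·)).prod).coeff 0 = L * (S.map (- ·)).prod := by
    rw [coeff_zero_eq_eval_zero, eval_mul, eval_C, eval_multiset_prod, Multiset.map_map]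
    simp
  rw [hcoeff, reverse_mul_of_domain, reverse_C, reverse_prod_X_sub_C_of_norm_eq_one _ hp,
    Polynomial.map_mul, map_C, C_mul]
  ring

theorem cons_cons_roots_eq_nthRoots {R : Type*} [CommRing R] [IsDomain R]
    {p : R[X]} {a b c z : R} {n : ℕ} (hn : 0 < n) (hc : c ≠ 0)
    (h : (X - C a) * (X - C b) * p = C c * (X ^ n - C z)) :
    a ::ₘ b ::ₘ p.roots = nthRoots n z := by
  have hne : (X - C a) * (X - C b) * p ≠ 0 :=
    h ▸ mul_ne_zero (C_ne_zero.2 hc) (X_pow_sub_C_ne_zero hn z)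
  rw [nthRoots, ← roots_C_mul (X ^ n - C z) hc, ← h, roots_mul hne,
    roots_mul (left_ne_zero_of_mul hne), roots_X_sub_C, roots_X_sub_C,
    add_assoc, Multiset.singleton_add, Multiset.singleton_add]

end Polynomial

namespace Complex

theorem nthRoots_nodup {n : ℕ} {z : ℂ} (hz : z ≠ 0) : (nthRoots n z).Nodup := by
  rcases n.eq_zero_or_pos with rfl | hn
  · simp
  · exact (isPrimitiveRoot_exp n hn.ne').nthRoots_nodup hz

theorem norm_eq_one_of_mem_nthRoots {n : ℕ} {z t : ℂ} (hz : ‖z‖ = 1)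
    (ht : t ∈ nthRoots n z) : ‖t‖ = 1 := by
  rcases n.eq_zero_or_pos with rfl | hn
  · simp at ht
  · rw [mem_nthRoots hn] at ht
    have h := congrArg norm ht
    rw [norm_pow, hz, ← one_pow n] at h
    exact (pow_left_inj₀ (norm_nonneg t) zero_le_one hn.ne').1 h

end Complex

@[simp] theorem chebr_zero (ω : ℝ) : chebr 0 ω = 1 := rfl

@[simp] theorem chebr_one (ω : ℝ) : chebr 1 ω = -ω := rfl

theorem chebr_add_two (k : ℕ) (ω : ℝ) :
    chebr (k + 2) ω = -ω * chebr (k + 1) ω - chebr k ω := rfl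

theorem chebr_neg_two_mul (k : ℕ) (x : ℝ) : chebr k (-2 * x) = (Chebyshev.U ℝ k).eval x := by
  induction k using Nat.twoStepInduction with
  | zero => simp
  | one => simp
  | more k ih1 ih2 =>
    rw [chebr_add_two, ih1, ih2, show ((k + 2 : ℕ) : ℤ) = (k : ℤ) + 2 by push_cast; ring,
      Chebyshev.U_add_two]
    push_cast
    simp only [eval_sub, eval_mul, eval_X, eval_ofNat]
    ring

theorem chebr_neg_two_mul_cos_mul_sin (k : ℕ) (φ : ℝ) :
    chebr k (-2 * cos φ) * sin φ = sin ((k + 1) * φ) := by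
  rw [chebr_neg_two_mul, Chebyshev.U_real_cos]
  push_cast
  ring_nf

theorem chebr_eq_zero_iff (s : ℕ) (ω : ℝ) :
    chebr s ω = 0 ↔ ∃ α ∈ Finset.Icc 1 s, ω = -2 * cos (π * α / (s + 1)) := by
  have hU : chebr s ω = (Chebyshev.U ℝ s).eval (-ω / 2) := by
    rw [← chebr_neg_two_mul]; ring_nf
  rw [hU, ← IsRoot.def, ← mem_roots (Chebyshev.U_ne_zero ℝ s (by omega)),
    Chebyshev.roots_U_real, Finset.mem_val, Finset.mem_image]
  constructor
  · rintro ⟨k, hk, hcos⟩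
    refine ⟨k + 1, by rw [Finset.mem_range] at hk; rw [Finset.mem_Icc]; omega, ?_⟩
    push_cast
    rw [mul_comm π, hcos]
    ring
  · rintro ⟨α, hα, rfl⟩
    rw [Finset.mem_Icc] at hα
    obtain ⟨k, rfl⟩ : ∃ k, α = k + 1 := ⟨α - 1, by omega⟩
    refine ⟨k, by rw [Finset.mem_range]; omega, ?_⟩
    push_cast
    rw [mul_comm π]
    ring

theorem cos_pi_mul_sub_div {α s : ℕ} (h : α ≤ s + 1) :
    cos (π * ↑(s + 1 - α) / (s + 1)) = -cos (π * α / (s + 1)) := by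
  rw [← cos_pi_sub]
  congr 1
  push_cast [h]
  field_simp

theorem exists_eq_neg_two_mul_cos_iff (s : ℕ) (ω : ℝ) :
    (∃ α ∈ Finset.Icc 1 s, ω = -2 * cos (π * α / (s + 1)))
      ↔ ∃ α ∈ Finset.Icc 1 s, ω = 2 * cos (π * α / (s + 1)) := by
  constructor <;> rintro ⟨α, hα, rfl⟩ <;> rw [Finset.mem_Icc] at hα <;>
    refine ⟨s + 1 - α, by rw [Finset.mem_Icc]; omega, ?_⟩ <;>
    rw [cos_pi_mul_sub_div (by omega)] <;> ring

theorem chebr_neg_two_mul_cos_pi_div {n α : ℕ} (hα : α ∈ Finset.Icc 1 (n + 1)) :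
    chebr n (-2 * cos (π * α / ((n + 1 : ℕ) + 1))) = -(-1) ^ α := by
  rw [Finset.mem_Icc] at hα
  set φ := π * α / ((n + 1 : ℕ) + 1)
  have hsin : 0 < sin φ := by
    apply sin_pos_of_pos_of_lt_pi
    · have : (0 : ℝ) < α := by exact_mod_cast hα.1
      positivity
    · rw [div_lt_iff₀ (by positivity)]
      have : (α : ℝ) < (n + 1 : ℕ) + 1 := by exact_mod_cast Nat.lt_succ_of_le hα.2
      nlinarith [pi_pos]
  have h := chebr_neg_two_mul_cos_mul_sin n φ
  rw [show ((n : ℝ) + 1) * φ = α * π - φ by simp only [φ]; push_cast; field_simp; ring,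
    sin_nat_mul_pi_sub] at h
  exact mul_right_cancel₀ hsin.ne' (h.trans (by ring))

theorem Rpoly_coeff (s : ℕ) (ω : ℝ) (k : ℕ) :
    (Rpoly s ω).coeff k = if k < s then ((chebr k ω : ℝ) : ℂ) else 0 := by
  simp [Rpoly, coeff_C_mul, coeff_X_pow]

theorem Rpoly_natDegree_le (s : ℕ) (ω : ℝ) : (Rpoly s ω).natDegree ≤ s - 1 := by
  rw [natDegree_le_iff_coeff_eq_zero]
  intro k hk
  rw [Rpoly_coeff, if_neg (by omega)]

theorem Rpoly_ne_zero {s : ℕ} (hs : 0 < s) (ω : ℝ) : Rpoly s ω ≠ 0 := by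
  intro h
  simpa [Rpoly_coeff, hs] using congrArg (coeff · 0) h

theorem Rpoly_map_conj (s : ℕ) (ω : ℝ) : (Rpoly s ω).map (starRingEnd ℂ) = Rpoly s ω := by
  ext k
  rw [coeff_map, Rpoly_coeff]
  split_ifs <;> simp

theorem mul_Rpoly_succ (ω : ℝ) (n : ℕ) :
    (X ^ 2 + C (ω : ℂ) * X + 1) * Rpoly (n + 1) ω
      = 1 - C (chebr (n + 1) ω : ℂ) * X ^ (n + 1) + C (chebr n ω : ℂ) * X ^ (n + 2) := by
  induction n with
  | zero =>
    simp only [Rpoly, Finset.sum_range_one, chebr_zero, chebr_one, zero_add, pow_zero,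
      pow_one, mul_one, Complex.ofReal_one, Complex.ofReal_neg, map_one, map_neg]
    ring
  | succ n ih =>
    rw [Rpoly, Finset.sum_range_succ, ← Rpoly, mul_add, ih, chebr_add_two]
    push_cast
    simp only [map_sub, map_mul, map_neg]
    ring

theorem chebr_eq_zero_of_roots_norm_eq_one {s : ℕ} (hs : 2 ≤ s) {ω : ℝ}
    (hdeg : (Rpoly s ω).natDegree = s - 1) (hroots : ∀ t ∈ (Rpoly s ω).roots, ‖t‖ = 1) :
    chebr s ω = 0 := by
  obtain ⟨n, rfl⟩ : ∃ n, s = n + 2 := ⟨s - 2, by omega⟩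
  have h := C_conj_leadingCoeff_mul_reverse hroots
  have hlead : (Rpoly (n + 2) ω).leadingCoeff = chebr (n + 1) ω := by
    rw [leadingCoeff, hdeg, Rpoly_coeff, if_pos (by omega)]; rfl
  rw [Rpoly_map_conj, hlead, Complex.conj_ofReal, Rpoly_coeff, if_pos (by omega)] at h
  have hcoeff0 := congrArg (coeff · 0) h
  have hcoeff1 := congrArg (coeff · 1) h
  simp only [coeff_C_mul, coeff_zero_reverse, coeff_one_reverse, nextCoeff, hlead, hdeg,
    Rpoly_coeff, chebr_zero, chebr_one] at hcoeff0 hcoeff1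
  norm_num [show n + 2 - 1 - 1 = n by omega] at hcoeff0 hcoeff1
  norm_cast at hcoeff0 hcoeff1
  rw [chebr_add_two]
  linear_combination (-chebr (n + 1) ω) * hcoeff1 + chebr n ω * hcoeff0

theorem X_sub_exp_mul_X_sub_exp (φ : ℝ) :
    (X - C (Complex.exp (Complex.I * φ))) * (X - C (Complex.exp (-Complex.I * φ)))
      = X ^ 2 + C ((-2 * cos φ : ℝ) : ℂ) * X + 1 := by
  set a := Complex.exp (Complex.I * φ)
  set b := Complex.exp (-Complex.I * φ)
  have hprod : C a * C b = 1 := by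
    rw [← C_mul, ← Complex.exp_add, ← C_1]; simp
  have hsum : C ((-2 * cos φ : ℝ) : ℂ) = -(C a + C b) := by
    rw [← C_add, ← C_neg]
    congr 1
    push_cast
    rw [neg_mul, Complex.two_cos]
    simp only [a, b]
    ring_nf
  rw [hsum]
  linear_combination hprod

theorem cons_cons_roots_Rpoly_eq_nthRoots {s α : ℕ} (hα : α ∈ Finset.Icc 1 s) :
    Complex.exp (Complex.I * ((π * α / (s + 1) : ℝ) : ℂ)) ::ₘ
      Complex.exp (-Complex.I * ((π * α / (s + 1) : ℝ) : ℂ)) ::ₘ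
      (Rpoly s (-2 * cos (π * α / (s + 1)))).roots = nthRoots (s + 1) ((-1) ^ α) := by
  obtain ⟨n, rfl⟩ : ∃ n, s = n + 1 := ⟨s - 1, by rw [Finset.mem_Icc] at hα; omega⟩
  have hroot := (chebr_eq_zero_iff (n + 1) _).2 ⟨α, hα, rfl⟩
  have hlead := chebr_neg_two_mul_cos_pi_div hα
  refine cons_cons_roots_eq_nthRoots (c := -(-1) ^ α) (by omega) (by simp) ?_
  rw [X_sub_exp_mul_X_sub_exp, mul_Rpoly_succ, hroot, hlead]
  have hsq : ((-1 : ℂ) ^ α) * (-1) ^ α = 1 := by rw [← mul_pow]; simp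
  push_cast
  rw [mul_sub, ← C_mul, neg_mul, hsq]
  simp only [C_neg, C_1, C_0]
  ring

theorem Rpoly_roots_of_chebr_eq_zero {s : ℕ} {ω : ℝ} (h : chebr s ω = 0) :
    (Rpoly s ω).natDegree = s - 1 ∧ (Rpoly s ω).roots.Nodup ∧
      Multiset.card (Rpoly s ω).roots = s - 1 ∧ ∀ t ∈ (Rpoly s ω).roots, ‖t‖ = 1 := by
  obtain ⟨α, hα, hω⟩ := (chebr_eq_zero_iff s ω).1 h
  have hcons := cons_cons_roots_Rpoly_eq_nthRoots hα
  rw [← hω] at hcons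
  have hnodup := hcons ▸ Complex.nthRoots_nodup (n := s + 1) (z := (-1) ^ α) (by simp)
  have hcard : Multiset.card (nthRoots (s + 1) ((-1 : ℂ) ^ α)) = s + 1 := by
    have hex := (mem_nthRoots (by omega)).1 (hcons ▸ Multiset.mem_cons_self _ _)
    rw [(Complex.isPrimitiveRoot_exp (s + 1) (by omega)).card_nthRoots, if_pos ⟨_, hex⟩]
  rw [← hcons, Multiset.card_cons, Multiset.card_cons] at hcard
  have hcard' : Multiset.card (Rpoly s ω).roots = s - 1 := by omega
  refine ⟨le_antisymm (Rpoly_natDegree_le s _) (hcard' ▸ card_roots' _),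
    hnodup.of_cons.of_cons, hcard', fun t ht ↦ ?_⟩
  refine Complex.norm_eq_one_of_mem_nthRoots (n := s + 1) (z := (-1) ^ α) (by simp) ?_
  rw [← hcons]
  exact Multiset.mem_cons_of_mem (Multiset.mem_cons_of_mem ht)

theorem setOf_eval_Rpoly_eq_zero {s α : ℕ} (hα : α ∈ Finset.Icc 1 s) :
    {t : ℂ | (Rpoly s (-2 * cos (π * α / (s + 1)))).eval t = 0}
      = {t : ℂ | t ^ (s + 1) = (-1) ^ α} \
          {Complex.exp (Complex.I * ((π * α / (s + 1) : ℝ) : ℂ)),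
           Complex.exp (-Complex.I * ((π * α / (s + 1) : ℝ) : ℂ))} := by
  have hs : 0 < s := by rw [Finset.mem_Icc] at hα; omega
  have hcons := cons_cons_roots_Rpoly_eq_nthRoots hα
  have hnodup := hcons ▸ Complex.nthRoots_nodup (n := s + 1) (z := (-1) ^ α) (by simp)
  obtain ⟨ha, hb⟩ : _ ∉ _ ∧ _ ∉ _ := ⟨(Multiset.nodup_cons.1 hnodup).1,
    (Multiset.nodup_cons.1 (Multiset.nodup_cons.1 hnodup).2).1⟩
  ext t
  simp only [Set.mem_ofPred_eq, Set.mem_sdiff, Set.mem_insert_iff, Set.mem_singleton_iff,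
    ← mem_nthRoots (Nat.succ_pos s), ← hcons, Multiset.mem_cons, ← IsRoot.def,
    ← mem_roots (Rpoly_ne_zero hs _)]
  refine ⟨fun ht ↦ ⟨.inr (.inr ht), ?_⟩, by tauto⟩
  rintro (rfl | rfl)
  exacts [ha (Multiset.mem_cons_of_mem ht), hb ht]

/-- ℛ_{s-1}(ω;·) has degree s-1 and s-1 pairwise distinct roots on the unit
circle iff r_s(ω) = 0, iff ω ∈ Ω_s; and for ω = -2cos(πα/(s+1)) its root set is
{t : t^{s+1} = (-1)^α} minus {e^{iφ_α}, e^{-iφ_α}}. -/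
theorem stmt9 (s : ℕ) (hs : 2 ≤ s) (ω : ℝ) :
    (((Rpoly s ω).natDegree = s - 1 ∧ (Rpoly s ω).roots.Nodup ∧
        Multiset.card (Rpoly s ω).roots = s - 1 ∧
        ∀ t ∈ (Rpoly s ω).roots, ‖t‖ = 1)
      ↔ chebr s ω = 0)
    ∧ (chebr s ω = 0 ↔ ∃ α ∈ Finset.Icc 1 s, ω = 2 * Real.cos (Real.pi * α / (s + 1)))
    ∧ ∀ α ∈ Finset.Icc 1 s,
        {t : ℂ | (Rpoly s (-2 * Real.cos (Real.pi * α / (s + 1)))).eval t = 0}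
          = {t : ℂ | t ^ (s + 1) = (-1) ^ α} \
              {Complex.exp (Complex.I * ((Real.pi * α / (s + 1) : ℝ) : ℂ)),
               Complex.exp (-Complex.I * ((Real.pi * α / (s + 1) : ℝ) : ℂ))} :=
  ⟨⟨fun ⟨hdeg, _, _, hnorm⟩ ↦ chebr_eq_zero_of_roots_norm_eq_one hs hdeg hnorm,
      Rpoly_roots_of_chebr_eq_zero⟩,
    (chebr_eq_zero_iff s ω).trans (exists_eq_neg_two_mul_cos_iff s ω),
    fun _ ↦ setOf_eval_Rpoly_eq_zero⟩
end

section
/- Let n ≥ 2, α ∈ {1,…,n+1}, φ_α = πα/(n+2), and ω = −2cos φ_α. The set {z ∈ ℂ : z^{n+2} = (−1)^α} \ {e^{iφ_α}, e^{−iφ_α}} has exactly n elements z_1,…,z_n, and the numbers X_k = −(sgn(sin((n+1)φ_α))/(n+2)) · (z_k² − 2 z_k cos φ_α + 1)/z_k^{n+3} are real and satisfy ∑_{k=1}^n X_k z_k^l = σ_l for every integer l with −(n−1) ≤ l ≤ n, where σ_0 = ω, σ_1 = σ_{−1} = 1, and σ_l = 0 for all other such l. -/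
/-!
With `N = n + 2` and `u = e^{iφ}`, `v = e^{-iφ}`, both `u` and `v` are `N`-th roots of `(-1)^α`,
so the `z_k` are the remaining `N - 2` roots. The sign factor equals `(-1)^(α+1)`, hence
`X_k z_k^l = ((-1)^α / N) (z_k - u)(z_k - v) z_k^(l - N - 1)`. This summand vanishes at `u` and
`v`, so the moment sum may be taken over all `N` roots, where `∑ w^m` is `N u^m` if `N ∣ m`
and `0` otherwise; in the range of `l` the only multiple of `N` among the exponents is `-N`.
Reality: `|z_k| = 1` and `z_k^(2N) = 1` make `X_k` equal to its conjugate.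
-/

open Finset Polynomial ComplexConjugate
open scoped Real

lemma Int.dvd_iff_eq_neg_of_lt_of_neg {N m : ℤ} (h₁ : -(2 * N) < m) (h₂ : m < 0) :
    N ∣ m ↔ m = -N := by
  refine ⟨fun ⟨q, hq⟩ => ?_, fun h => h ▸ dvd_neg.mpr dvd_rfl⟩
  subst hq
  have hq₁ : q < 0 := by nlinarith
  have hq₂ : -2 < q := by nlinarith
  obtain rfl : q = -1 := by omega
  ring

lemma Finset.sum_comp_of_range_eq {ι β M : Type*} [Fintype ι] [AddCommMonoid M] {z : ι → β}
    (hz : Function.Injective z) {S : Finset β} (hS : Set.range z = S) (f : β → M) :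
    ∑ i, f (z i) = ∑ w ∈ S, f w := by
  classical
  rw [← sum_image hz.injOn]
  congr
  apply coe_injective
  simp [hS]

namespace IsPrimitiveRoot

variable {K : Type*} [Field K] {N : ℕ} {ζ : K}

theorem sum_range_pow_zpow (hζ : IsPrimitiveRoot ζ N) (m : ℤ) :
    ∑ j ∈ range N, (ζ ^ j) ^ m = if (N : ℤ) ∣ m then (N : K) else 0 := by
  simp_rw [← zpow_natCast, ← zpow_mul, mul_comm _ m, zpow_mul, zpow_natCast]
  split_ifs with hm
  · simp [(hζ.zpow_eq_one_iff_dvd m).mpr hm]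
  · have hne : ζ ^ m ≠ 1 := mt (hζ.zpow_eq_one_iff_dvd m).mp hm
    rw [geom_sum_eq hne, ← zpow_natCast, ← zpow_mul, mul_comm, zpow_mul, zpow_natCast,
      hζ.pow_eq_one, one_zpow, sub_self, zero_div]

theorem nthRootsFinset_eq_image [DecidableEq K] (hζ : IsPrimitiveRoot ζ N) (α : K) :
    nthRootsFinset N (α ^ N) = (range N).image (ζ ^ · * α) := by
  rw [nthRootsFinset_def, hζ.nthRoots_eq rfl]
  rfl

theorem card_nthRootsFinset_pow (hζ : IsPrimitiveRoot ζ N) {α : K} (hα : α ≠ 0) :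
    #(nthRootsFinset N (α ^ N)) = N := by
  classical
  rw [hζ.nthRootsFinset_eq_image, card_image_of_injOn (hζ.injOn_pow_mul hα), card_range]

theorem card_nthRootsFinset_sdiff_pair [DecidableEq K] (hζ : IsPrimitiveRoot ζ N) {u v : K}
    (hu : u ≠ 0) (hv : v ^ N = u ^ N) (huv : u ≠ v) :
    #(nthRootsFinset N (u ^ N) \ {u, v}) = N - 2 := by
  obtain rfl | hN := N.eq_zero_or_pos
  · simp
  have hsub : {u, v} ⊆ nthRootsFinset N (u ^ N) := by
    simp [insert_subset_iff, Polynomial.mem_nthRootsFinset hN, hv]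
  rw [card_sdiff_of_subset hsub, hζ.card_nthRootsFinset_pow hu, card_pair huv]

theorem sum_nthRootsFinset_zpow (hζ : IsPrimitiveRoot ζ N) {α : K} (hα : α ≠ 0) (m : ℤ) :
    ∑ w ∈ nthRootsFinset N (α ^ N), w ^ m = if (N : ℤ) ∣ m then N * α ^ m else 0 := by
  classical
  rw [hζ.nthRootsFinset_eq_image, sum_image (hζ.injOn_pow_mul hα)]
  simp_rw [mul_zpow, ← sum_mul, hζ.sum_range_pow_zpow]
  split_ifs <;> simp

theorem sum_nthRootsFinset_zpow_of_neg (hζ : IsPrimitiveRoot ζ N) {α : K} (hα : α ≠ 0)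
    {m : ℤ} (h₁ : -(2 * N : ℤ) < m) (h₂ : m < 0) :
    ∑ w ∈ nthRootsFinset N (α ^ N), w ^ m = if m = -N then N * (α ^ N)⁻¹ else 0 := by
  have hdvd := Int.dvd_iff_eq_neg_of_lt_of_neg h₁ h₂
  rw [hζ.sum_nthRootsFinset_zpow hα]
  by_cases hm : m = -N
  · rw [if_pos (hdvd.mpr hm), if_pos hm, hm, zpow_neg, zpow_natCast]
  · rw [if_neg (mt hdvd.mp hm), if_neg hm]

theorem sum_nthRootsFinset_sdiff_moment [DecidableEq K] (hζ : IsPrimitiveRoot ζ N) {u v b : K}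
    (huv : u * v = 1) (hb : 2 * b = u + v) (c : K) {l : ℤ} (hl₁ : 3 - (N : ℤ) ≤ l)
    (hl₂ : l ≤ N - 2) :
    ∑ w ∈ nthRootsFinset N (u ^ N) \ {u, v}, c * (w ^ 2 - 2 * w * b + 1) / w ^ (N + 1) * w ^ l =
      c * N * (u ^ N)⁻¹ * (if l = 0 then -2 * b else if l = 1 ∨ l = -1 then 1 else 0) := by
  have hu : u ≠ 0 := left_ne_zero_of_mul_eq_one huv
  set m := l - (N + 1) with hm
  have hvanish : ∀ w ∈ nthRootsFinset N (u ^ N), w ∉ nthRootsFinset N (u ^ N) \ {u, v} →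
      c * (w ^ 2 - 2 * w * b + 1) / w ^ (N + 1) * w ^ l = 0 := by
    intro w hw hw'
    obtain rfl | rfl : w = u ∨ w = v := by simpa [hw, or_iff_not_imp_left] using hw'
    all_goals simp [show w ^ 2 - 2 * w * b + 1 = 0 by linear_combination -w * hb - huv]
  have hexpand : ∀ w ∈ nthRootsFinset N (u ^ N),
      c * (w ^ 2 - 2 * w * b + 1) / w ^ (N + 1) * w ^ l =
        c * (w ^ (m + 2) - 2 * b * w ^ (m + 1) + w ^ m) := by
    intro w hw
    have hw0 : w ≠ 0 := ne_zero_of_mem_nthRootsFinset (pow_ne_zero N hu) hw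
    rw [zpow_add₀ hw0, zpow_add₀ hw0, zpow_one, zpow_two, hm, zpow_sub₀ hw0,
      ← Nat.cast_add_one, zpow_natCast]
    ring
  rw [sum_subset sdiff_subset hvanish, sum_congr rfl hexpand, ← mul_sum, sum_add_distrib,
    sum_sub_distrib, ← mul_sum, hζ.sum_nthRootsFinset_zpow_of_neg hu (m := m + 2) (by omega)
    (by omega), hζ.sum_nthRootsFinset_zpow_of_neg hu (m := m + 1) (by omega) (by omega),
    hζ.sum_nthRootsFinset_zpow_of_neg hu (m := m) (by omega) (by omega)]
  simp only [show m + 2 = -N ↔ l = -1 by omega, show m + 1 = -N ↔ l = 0 by omega,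
    show m = -N ↔ l = 1 by omega]
  split_ifs <;> first | omega | ring

end IsPrimitiveRoot

lemma Real.sin_pi_mul_div_pos {a b : ℝ} (ha : 0 < a) (hab : a < b) : 0 < sin (π * a / b) := by
  apply sin_pos_of_pos_of_lt_pi (div_pos (mul_pos pi_pos ha) (by linarith))
  rw [div_lt_iff₀ (by linarith)]
  nlinarith [pi_pos]

lemma Real.sign_sin_mul_eq_neg_one_pow {x y : ℝ} {α : ℕ} (hx : (y + 1) * x = α * π)
    (hsin : 0 < sin x) :
    sign (sin (y * x)) = (-1) ^ (α + 1) := by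
  rw [show y * x = α * π - x by linarith, sin_nat_mul_pi_sub]
  rcases neg_one_pow_eq_or ℝ α with h | h <;> simp [h, pow_succ, sign_of_pos, sign_of_neg, hsin]

namespace Complex

lemma exp_I_mul_mul_exp_neg_I_mul (x : ℂ) : exp (I * x) * exp (-I * x) = 1 := by
  rw [← exp_add, neg_mul, add_neg_cancel, exp_zero]

lemma exp_I_mul_ne_exp_neg_I_mul {x : ℝ} (hx : Real.sin x ≠ 0) :
    exp (I * x) ≠ exp (-I * x) := by
  intro h
  have := congrArg im h
  simp [exp_im] at this
  exact hx (by linarith)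

lemma two_cos_eq_exp_I_mul_add (x : ℂ) : 2 * cos x = exp (I * x) + exp (-I * x) := by
  simp only [two_cos, neg_mul, mul_comm x I]

lemma exp_I_mul_pow_eq_neg_one_pow {x : ℝ} {N α : ℕ} (hx : N * x = α * π) :
    exp (I * x) ^ N = (-1) ^ α := by
  rw [← exp_nat_mul, ← exp_pi_mul_I, ← exp_nat_mul]
  congr 1
  have hx' : (N : ℂ) * x = α * π := by exact_mod_cast hx
  linear_combination I * hx'

lemma im_ofReal_mul_div_pow_eq_zero {w : ℂ} {N : ℕ} (hN : N ≠ 0) (hw : w ^ (2 * N) = 1)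
    (a b : ℝ) : ((a : ℂ) * (w ^ 2 - 2 * w * b + 1) / w ^ (N + 1)).im = 0 := by
  have hw0 : w ≠ 0 := by rintro rfl; simp [hN] at hw
  have hconj : conj w = w⁻¹ := (inv_eq_conj (norm_eq_one_of_pow_eq_one hw (by omega))).symm
  rw [← conj_eq_iff_im]
  simp only [map_div₀, map_mul, map_add, map_sub, map_pow, map_one, map_ofNat, conj_ofReal,
    hconj, inv_pow]
  field_simp
  linear_combination (a * w ^ 2 * (w ^ 2 - 2 * w * b + 1)) * hw

end Complex

theorem stmt12_general (n : ℕ) (α : ℕ) (hα : α ∈ Finset.Icc 1 (n + 1)) :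
    let φ : ℝ := Real.pi * α / (n + 2)
    let ω : ℝ := -2 * Real.cos φ
    let Zset : Set ℂ := {w : ℂ | w ^ (n + 2) = (-1) ^ α} \
      {Complex.exp (Complex.I * (φ : ℂ)), Complex.exp (-Complex.I * (φ : ℂ))}
    Zset.ncard = n ∧
    ∀ z : Fin n → ℂ, Function.Injective z → Set.range z = Zset →
      let X : Fin n → ℂ := fun k =>
        ((-(Real.sign (Real.sin ((n + 1) * φ)) / (n + 2)) : ℝ) : ℂ) *
          (z k ^ 2 - 2 * z k * ((Real.cos φ : ℝ) : ℂ) + 1) / z k ^ (n + 3)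
      (∀ k, (X k).im = 0) ∧
      ∀ l : ℤ, -((n : ℤ) - 1) ≤ l → l ≤ n →
        ∑ k : Fin n, X k * z k ^ l =
          if l = 0 then ((ω : ℝ) : ℂ) else if l = 1 ∨ l = -1 then 1 else 0 := by
  intro φ ω Zset
  obtain ⟨hα₁, hα₂⟩ := mem_Icc.mp hα
  have hNφ : ((n : ℝ) + 2) * φ = α * π := by simp only [φ]; field_simp
  have hsin : 0 < Real.sin φ :=
    Real.sin_pi_mul_div_pos (by exact_mod_cast hα₁) (by exact_mod_cast (by omega : α < n + 2))
  set u := Complex.exp (Complex.I * φ)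
  set v := Complex.exp (-Complex.I * φ)
  have huv : u * v = 1 := Complex.exp_I_mul_mul_exp_neg_I_mul _
  have huN : u ^ (n + 2) = (-1) ^ α :=
    Complex.exp_I_mul_pow_eq_neg_one_pow (by exact_mod_cast hNφ)
  have hvN : v ^ (n + 2) = u ^ (n + 2) := by
    rw [eq_inv_of_mul_eq_one_right huv, inv_pow, huN, ← inv_pow, inv_neg_one]
  have hζ := Complex.isPrimitiveRoot_exp (n + 2) (by omega)
  have hZ : Zset = ↑(nthRootsFinset (n + 2) (u ^ (n + 2)) \ {u, v}) := by
    rw [coe_sdiff, coe_pair, nthRootsFinset_toSet (by omega), huN]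
  refine ⟨?_, fun z hz hrange => ?_⟩
  · rw [hZ, Set.ncard_coe_finset, hζ.card_nthRootsFinset_sdiff_pair (Complex.exp_ne_zero _) hvN
      (Complex.exp_I_mul_ne_exp_neg_I_mul hsin.ne')]
    rfl
  have hzN : ∀ k, z k ^ (n + 2) = (-1) ^ α :=
    fun k => (hrange ▸ Set.mem_range_self k : z k ∈ Zset).1
  set c : ℂ := ((-(Real.sign (Real.sin ((n + 1) * φ)) / (n + 2)) : ℝ) : ℂ) with hc
  set b : ℂ := ((Real.cos φ : ℝ) : ℂ)
  refine ⟨fun k => Complex.im_ofReal_mul_div_pow_eq_zero (N := n + 2) (by omega) ?_ _ _,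
    fun l hl₁ hl₂ => ?_⟩
  · rw [pow_mul', hzN k, ← pow_mul, pow_mul', neg_one_sq, one_pow]
  have hc' : c = (-1) ^ α / (n + 2) := by
    rw [hc, Real.sign_sin_mul_eq_neg_one_pow (α := α) (by linarith) hsin]
    push_cast
    ring
  have hb : 2 * b = u + v := by
    simp only [b, Complex.ofReal_cos]
    exact Complex.two_cos_eq_exp_I_mul_add _
  have hmoment := hζ.sum_nthRootsFinset_sdiff_moment huv hb c (l := l) (by omega) (by omega)
  rw [← Finset.sum_comp_of_range_eq hz (hrange.trans hZ)] at hmoment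
  refine hmoment.trans ?_
  have hN : (n + 2 : ℂ) ≠ 0 := by norm_cast
  rw [hc', huN, show (-1) ^ α / (n + 2 : ℂ) * (n + 2 : ℕ) * ((-1) ^ α)⁻¹ = 1 by
    push_cast; field_simp, one_mul]
  simp [ω, b]

/-- explicit regular solution for μ = 1. For ω = -2cos φ_α,
φ_α = πα/(n+2), the set {z : z^{n+2} = (-1)^α} \ {e^{iφ_α}, e^{-iφ_α}} has exactly n
elements, and the amplitudes X_k = -(sgn(sin((n+1)φ_α))/(n+2))·(z_k²-2z_k cos φ_α+1)/z_k^{n+3}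
are real and solve the full moment system. -/
theorem stmt12 (n : ℕ) (hn : 2 ≤ n) (α : ℕ) (hα : α ∈ Finset.Icc 1 (n + 1)) :
    let φ : ℝ := Real.pi * α / (n + 2)
    let ω : ℝ := -2 * Real.cos φ
    let Zset : Set ℂ := {w : ℂ | w ^ (n + 2) = (-1) ^ α} \
      {Complex.exp (Complex.I * (φ : ℂ)), Complex.exp (-Complex.I * (φ : ℂ))}
    Zset.ncard = n ∧
    ∀ z : Fin n → ℂ, Function.Injective z → Set.range z = Zset →
      let X : Fin n → ℂ := fun k =>
        ((-(Real.sign (Real.sin ((n + 1) * φ)) / (n + 2)) : ℝ) : ℂ) *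
          (z k ^ 2 - 2 * z k * ((Real.cos φ : ℝ) : ℂ) + 1) / z k ^ (n + 3)
      (∀ k, (X k).im = 0) ∧
      ∀ l : ℤ, -((n : ℤ) - 1) ≤ l → l ≤ n →
        ∑ k : Fin n, X k * z k ^ l =
          if l = 0 then ((ω : ℝ) : ℂ) else if l = 1 ∨ l = -1 then 1 else 0 :=
  stmt12_general n α hα
end

section
/- Let n ≥ 1 and m < n, let Z_1,…,Z_m and z_1,…,z_m be complex numbers, and put ω_l := ∑_{k=1}^m Z_k z_k^l for l = 0,…,2n−1. Then the determinant of the (n+1)×(n+1) matrix whose first row is (1, z, z², …, z^n) and whose remaining rows, indexed by i = 1,…,n, have entry ω_{i−1+j} in column j (columns indexed j = 0,…,n), is equal to zero for every z ∈ ℂ. -/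
/-! Each of the last `n` rows of the matrix is the combination `∑ₖ Zₖ zₖ^(i-1) • (zₖ^j)ⱼ` of the
`m` geometric vectors `(zₖ^j)ⱼ`; as `m < n`, these rows are linearly dependent, so the
determinant vanishes whatever the first row is. -/

open Function Set Submodule

theorem not_linearIndependent_of_range_le_span {R M ι : Type*} [Ring R] [StrongRankCondition R]
    [AddCommGroup M] [Module R M] [Fintype ι] {m : ℕ} (v : ι → M) (u : Fin m → M)
    (hcard : m < Fintype.card ι) (hv : range v ≤ span R (range u)) :
    ¬ LinearIndependent R v := by
  classical
  intro hli
  have hle := linearIndependent_le_span' v hli (range u) hv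
  rw [Cardinal.mk_fintype, Nat.cast_le] at hle
  have := Fintype.card_range_le u
  simp only [Fintype.card_fin] at this
  omega

theorem Matrix.det_eq_zero_of_rows_mem_span {R ι κ : Type*} [CommRing R] [IsDomain R]
    [Fintype ι] [DecidableEq ι] [Fintype κ] {m : ℕ} (A : Matrix ι ι R) {f : κ → ι}
    (hf : Injective f) (u : Fin m → ι → R) (hcard : m < Fintype.card κ)
    (hA : ∀ i, A (f i) ∈ span R (range u)) : A.det = 0 :=
  det_eq_zero_of_not_linearIndependent_rows fun hli =>
    not_linearIndependent_of_range_le_span _ u hcard (range_subset_iff.2 hA) (hli.comp f hf)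

theorem stmt13_general (n m : ℕ) (hm : m < n) (z Z : Fin m → ℂ) (w : ℂ) :
    Matrix.det (Matrix.of fun i j : Fin (n + 1) =>
      if (i : ℕ) = 0 then w ^ (j : ℕ)
      else ∑ k : Fin m, Z k * z k ^ ((i : ℕ) - 1 + (j : ℕ))) = 0 := by
  refine Matrix.det_eq_zero_of_rows_mem_span _ (Fin.succ_injective n)
    (fun k (j : Fin (n + 1)) => z k ^ (j : ℕ)) (by simpa using hm) fun i => ?_
  convert sum_mem fun k (_ : k ∈ Finset.univ) =>
    smul_mem _ (Z k * z k ^ (i : ℕ)) (subset_span (mem_range_self k)) using 1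
  ext j
  simp [Finset.sum_apply, pow_add, mul_assoc]

/-- if the moments come from an exponential sum with m < n terms, the
bordered Hankel generating determinant vanishes identically in z. -/
theorem stmt13 (n m : ℕ) (hn : 1 ≤ n) (hm : m < n) (z Z : Fin m → ℂ) (w : ℂ) :
    Matrix.det (Matrix.of fun i j : Fin (n + 1) =>
      if (i : ℕ) = 0 then w ^ (j : ℕ)
      else ∑ k : Fin m, Z k * z k ^ ((i : ℕ) - 1 + (j : ℕ))) = 0 :=
  stmt13_general n m hm z Z w
end

section
/- Let μ ≥ 1, s ≥ 2, n = sμ − 1, and ω ∈ ℝ. Define S_{n−1} = ω, S_{n−1−μ} = S_{n−1+μ} = 1, and S_l = 0 for every other l ∈ {0,…,2n−1}. If for some m ≤ n there exist nonzero complex numbers Z_1,…,Z_m and pairwise distinct complex numbers z_1,…,z_m with |z_k| = 1 such that ∑_{k=1}^m Z_k z_k^l = S_l for every l = 0,…,2n−1, then U_s(ω/2) = 0, where U_s is the Chebyshev polynomial of the second kind. -/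
/-!
Put `T = 1 + ω X^μ + X^{2μ}`, `P = ∏ₖ (1 - z_k X)` and `N = (s + 1) μ = n + 1 + μ`. The
moment polynomial `∑_{l < 2n} S_l X^l` is `X^{n-1-μ} T`, and multiplying a moment polynomial
by `P` kills its coefficients of degrees `m, …, 2n - 1` (Prony), so `T P` has no monomials of
degree strictly between `μ` and `N`. The Chebyshev recursion gives `X^N ≡ p X^μ + q (mod T)`
with `p = (-1)^s U_s(ω/2)`, and together with the gap this forces `T P = (X^N - p X^μ - q) B`.
Hence `X^N - p X^μ - q = T G` with `G ∣ P`. Now `G` has real coefficients and unimodular roots,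
so it is self-reciprocal up to a scalar, and so is the palindromic `T`; but `X^N - p X^μ - q`
is self-reciprocal up to a scalar only if `p = 0`.
-/

open Polynomial Finset

noncomputable section

section Prony

variable {R ι : Type*} [CommRing R] [Fintype ι]

def momentPoly (Z z : ι → R) (L : ℕ) : R[X] :=
  ∑ l ∈ range L, C (∑ k, Z k * z k ^ l) * X ^ l

theorem coeff_momentPoly (Z z : ι → R) (L i : ℕ) :
    (momentPoly Z z L).coeff i = if i < L then ∑ k, Z k * z k ^ i else 0 := by
  simp only [momentPoly, finsetSum_coeff, coeff_C_mul_X_pow, sum_ite_eq, mem_range]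

theorem momentPoly_eq_sum_C_mul_geom_sum (Z z : ι → R) (L : ℕ) :
    momentPoly Z z L = ∑ k, C (Z k) * ∑ l ∈ range L, (C (z k) * X) ^ l := by
  simp only [momentPoly, map_sum, map_mul, map_pow, sum_mul, mul_sum, mul_pow]
  rw [sum_comm]
  simp only [mul_assoc]

omit [Fintype ι] in
theorem natDegree_prod_one_sub_C_mul_X_le (z : ι → R) (s : Finset ι) :
    (∏ k ∈ s, (1 - C (z k) * X)).natDegree ≤ #s := by
  refine (natDegree_prod_le _ _).trans ?_
  rw [card_eq_sum_ones]
  exact sum_le_sum fun k _ => by compute_degree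

theorem coeff_momentPoly_mul_prod_eq_zero (Z z : ι → R) {L t : ℕ}
    (hmt : Fintype.card ι ≤ t) (htL : t < L) :
    (momentPoly Z z L * ∏ k, (1 - C (z k) * X)).coeff t = 0 := by
  classical
  rw [momentPoly_eq_sum_C_mul_geom_sum, sum_mul, finsetSum_coeff]
  refine sum_eq_zero fun k _ => ?_
  have hgeom : (∑ l ∈ range L, (C (z k) * X) ^ l) * ∏ j, (1 - C (z j) * X)
      = (1 - C (z k ^ L) * X ^ L) * ∏ j ∈ univ.erase k, (1 - C (z j) * X) := by
    rw [← mul_prod_erase univ _ (mem_univ k), ← mul_assoc, geom_sum_mul_neg, mul_pow, C_pow]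
  have hdeg : (∏ j ∈ univ.erase k, (1 - C (z j) * X)).natDegree < t := by
    have := natDegree_prod_one_sub_C_mul_X_le z (univ.erase k)
    rw [card_erase_of_mem (mem_univ k), card_univ] at this
    have := Fintype.card_pos_iff.mpr ⟨k⟩
    omega
  rw [mul_assoc, hgeom, coeff_C_mul, sub_mul, one_mul, coeff_sub, mul_assoc, coeff_C_mul,
    coeff_X_pow_mul', if_neg (by omega), coeff_eq_zero_of_natDegree_lt hdeg]
  simp

end Prony

open Polynomial.Chebyshev (U) in
theorem trinomial_dvd_X_pow_sub_chebyshevU {R : Type*} [CommRing R] (x : R) (μ k : ℕ) :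
    trinomial 0 μ (2 * μ) 1 (2 * x) 1 ∣ X ^ ((k + 1) * μ) -
      (C ((-1) ^ k * (U R k).eval x) * X ^ μ + C ((-1) ^ k * (U R (k - 1 : ℤ)).eval x)) := by
  induction k with
  | zero => simp
  | succ k ih =>
    obtain ⟨d, hd⟩ := ih
    have hU : (U R ((k + 1 : ℕ) : ℤ)).eval x =
        2 * x * (U R k).eval x - (U R (k - 1 : ℤ)).eval x := by
      simp [Polynomial.Chebyshev.U_add_one]
    refine ⟨X ^ μ * d + C ((-1) ^ k * (U R k).eval x), ?_⟩
    rw [trinomial_def] at hd ⊢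
    rw [hU, Nat.cast_add_one, add_sub_cancel_right]
    simp only [map_mul, map_sub, map_pow, map_neg, map_one, map_ofNat, pow_zero, mul_one,
      one_mul] at hd ⊢
    linear_combination (X : R[X]) ^ μ * hd

theorem trinomial_map {R S : Type*} [Semiring R] [Semiring S] (φ : R →+* S) (k m n : ℕ)
    (u v w : R) : (trinomial k m n u v w).map φ = trinomial k m n (φ u) (φ v) (φ w) := by
  simp [trinomial_def]

theorem reverse_trinomial_self {R : Type*} [Semiring R] [Nontrivial R] {μ : ℕ} (hμ : 0 < μ)
    (v : R) : (trinomial 0 μ (2 * μ) 1 v 1).reverse = trinomial 0 μ (2 * μ) 1 v 1 := by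
  have h := trinomial_mirror (u := (1 : R)) (v := v) hμ (by omega : μ < 2 * μ) one_ne_zero
    one_ne_zero
  rwa [mirror, trinomial_natTrailingDegree hμ (by omega) one_ne_zero, pow_zero, mul_one,
    show 2 * μ - μ + 0 = μ by omega] at h

theorem reverse_multiset_prod {R : Type*} [CommSemiring R] [NoZeroDivisors R]
    (s : Multiset R[X]) : s.prod.reverse = (s.map reverse).prod := by
  induction s using Multiset.induction_on with
  | empty => simpa using reverse_C (1 : R)
  | cons p s ih =>
    rw [Multiset.prod_cons, reverse_mul_of_domain, ih, Multiset.map_cons, Multiset.prod_cons]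

theorem reverse_X_sub_C {R : Type*} [CommRing R] [Nontrivial R] (ρ : R) :
    (X - C ρ).reverse = 1 - C ρ * X := by
  have hX : (X : R[X]).reverse = 1 := by rw [← mul_one X, reverse_X_mul, ← C_1, reverse_C]
  rw [sub_eq_add_neg, ← C_neg, reverse_add_C, hX, natDegree_X, pow_one, C_neg, neg_mul,
    ← sub_eq_add_neg]

theorem exists_reverse_eq_C_mul_of_norm_eq_one {G : ℂ[X]} (hG : G.map (starRingEnd ℂ) = G)
    (hroots : ∀ ρ ∈ G.roots, ‖ρ‖ = 1) : ∃ γ, G.reverse = C γ * G := by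
  have hsplit := IsAlgClosed.splits G
  have hconj : G.roots.map (starRingEnd ℂ) = G.roots := by
    rw [← hsplit.roots_map, hG]
  -- `ρ⁻¹ = conj ρ` on the unit circle, so reversing a linear factor conjugates its root
  have hlin : ∀ ρ ∈ G.roots, (X - C ρ).reverse = C (-ρ) * (X - C (starRingEnd ℂ ρ)) := by
    intro ρ hρ
    have : ρ * starRingEnd ℂ ρ = 1 := by
      rw [Complex.mul_conj, Complex.normSq_eq_norm_sq, hroots ρ hρ]; norm_num
    have h : C ρ * C (starRingEnd ℂ ρ) = 1 := by rw [← C_mul, this, C_1]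
    rw [reverse_X_sub_C, C_neg]
    linear_combination -h
  have hrev : (G.roots.map fun ρ => X - C ρ).map reverse
      = G.roots.map fun ρ => C (-ρ) * (X - C (starRingEnd ℂ ρ)) := by
    rw [Multiset.map_map]
    exact Multiset.map_congr rfl hlin
  have hconjprod : (G.roots.map fun ρ => X - C (starRingEnd ℂ ρ)).prod
      = (G.roots.map fun ρ => X - C ρ).prod := by
    conv_rhs => rw [← hconj, Multiset.map_map]
    rfl
  refine ⟨(G.roots.map fun ρ => -ρ).prod, ?_⟩
  have hfac := hsplit.eq_prod_roots
  conv_lhs => rw [hfac]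
  rw [reverse_mul_of_domain, reverse_C, reverse_multiset_prod, hrev, Multiset.prod_map_mul,
    hconjprod, mul_left_comm, ← hfac, map_multiset_prod, Multiset.map_map]
  rfl

theorem norm_eq_one_of_mem_roots_of_dvd {ι : Type*} [Fintype ι] {z : ι → ℂ}
    (habs : ∀ k, ‖z k‖ = 1) {G : ℂ[X]} (hG : G ∣ ∏ k, (1 - C (z k) * X)) :
    ∀ ρ ∈ G.roots, ‖ρ‖ = 1 := by
  intro ρ hρ
  have hroot := eval_eq_zero_of_dvd_of_eval_eq_zero hG (mem_roots'.mp hρ).2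
  rw [eval_prod] at hroot
  obtain ⟨k, -, hk⟩ := prod_eq_zero_iff.mp hroot
  simp only [eval_sub, eval_one, eval_mul, eval_C, eval_X] at hk
  have : ‖z k * ρ‖ = 1 := by rw [show z k * ρ = 1 by linear_combination -hk, norm_one]
  rwa [norm_mul, habs k, one_mul] at this

theorem eq_zero_of_reverse_eq_C_mul {R : Type*} [CommRing R] [IsDomain R] {p q γ : R}
    {μ N : ℕ} (hμ : 0 < μ) (hN : 2 * μ < N)
    (h : (X ^ N - (C p * X ^ μ + C q)).reverse = C γ * (X ^ N - (C p * X ^ μ + C q))) :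
    p = 0 := by
  set f : R[X] := X ^ N - (C p * X ^ μ + C q)
  have hdeg : f.natDegree = N := by
    unfold f; compute_degree!
    all_goals first | omega | simp [show N ≠ μ by omega, show N ≠ 0 by omega]
  have hN0 : f.coeff N = 1 ∧ f.coeff 0 = -q := by
    simp [f, coeff_X_pow, coeff_C, show N ≠ μ by omega, show N ≠ 0 by omega,
      show 0 ≠ N by omega, hμ.ne]
  have hNμ : f.coeff (N - μ) = 0 ∧ f.coeff μ = -p := by
    simp [f, coeff_X_pow, coeff_C, show N - μ ≠ N by omega, show N - μ ≠ μ by omega,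
      show N - μ ≠ 0 by omega, show μ ≠ N by omega, hμ.ne']
  have h0 := congrArg (coeff · 0) h
  have hμ' := congrArg (coeff · μ) h
  simp only [coeff_reverse, hdeg, revAt_le (Nat.zero_le N), revAt_le (show μ ≤ N by omega),
    Nat.sub_zero, coeff_C_mul, hN0, hNμ] at h0 hμ'
  have hγ : γ ≠ 0 := by rintro rfl; simp at h0
  exact neg_eq_zero.mp ((mul_eq_zero.mp hμ'.symm).resolve_left hγ)

theorem eq_mul_divByMonic_of_coeff_eq_zero {R : Type*} [CommRing R] [IsDomain R]
    {T P r : R[X]} {μ N : ℕ} (hμ : 0 < μ) (hT : T.natDegree = 2 * μ) (hTf : T ∣ X ^ N - r)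
    (hr : r.natDegree ≤ μ) (hTP : T ∣ P) (hgap : ∀ i, μ < i → i < N → P.coeff i = 0)
    (hP : P.natDegree < N + μ) : P = (X ^ N - r) * (P /ₘ X ^ N) := by
  set a := P %ₘ X ^ N
  set B := P /ₘ X ^ N
  have hsplit : a + X ^ N * B = P := modByMonic_add_div P (X ^ N)
  have hB : B.natDegree < μ := by
    rw [natDegree_divByMonic _ (monic_X_pow N), natDegree_X_pow]; omega
  have ha : a.natDegree ≤ μ := by
    refine natDegree_le_iff_coeff_eq_zero.mpr fun i hi => ?_
    rcases lt_or_ge i N with hiN | hiN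
    · have := congrArg (coeff · i) hsplit
      simp only [coeff_add, coeff_X_pow_mul', if_neg (not_le.mpr hiN), add_zero] at this
      rw [this, hgap i (by exact_mod_cast hi) hiN]
    · refine coeff_eq_zero_of_degree_lt ((degree_modByMonic_lt _ (monic_X_pow N)).trans_le ?_)
      rw [degree_X_pow]; exact_mod_cast hiN
  have hw : a + r * B = 0 := by
    refine eq_zero_of_dvd_of_degree_lt (p := T) ?_ (degree_lt_degree ?_)
    · have : a + r * B = P - (X ^ N - r) * B := by rw [← hsplit]; ring
      exact this ▸ dvd_sub hTP (dvd_mul_of_dvd_left hTf B)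
    · have := natDegree_add_le a (r * B)
      have := natDegree_mul_le (p := r) (q := B)
      omega
  linear_combination hw - hsplit

open Polynomial.Chebyshev (U) in
theorem chebyshevU_eval_eq_zero_of_coeff_eq_zero {ι : Type*} [Fintype ι] {z : ι → ℂ}
    (habs : ∀ k, ‖z k‖ = 1) {μ s : ℕ} (hμ : 0 < μ) (hs : 2 ≤ s)
    (hcard : Fintype.card ι < s * μ) (ω : ℝ)
    (hgap : ∀ i, μ < i → i < (s + 1) * μ →
      (trinomial 0 μ (2 * μ) 1 (ω : ℂ) 1 * ∏ k, (1 - C (z k) * X)).coeff i = 0) :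
    (U ℝ s).eval (ω / 2) = 0 := by
  set N := (s + 1) * μ
  have hN : N = s * μ + μ := add_one_mul s μ
  have hsμ : 2 * μ ≤ s * μ := Nat.mul_le_mul_right μ hs
  set p := (-1) ^ s * (U ℝ s).eval (ω / 2)
  set q := (-1) ^ s * (U ℝ (s - 1 : ℤ)).eval (ω / 2)
  set T : ℂ[X] := trinomial 0 μ (2 * μ) 1 (ω : ℂ) 1
  set P : ℂ[X] := ∏ k, (1 - C (z k) * X)
  set f : ℂ[X] := X ^ N - (C (p : ℂ) * X ^ μ + C (q : ℂ))
  obtain ⟨G, hGreal, hfTG⟩ : ∃ G : ℂ[X], G.map (starRingEnd ℂ) = G ∧ f = T * G := by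
    obtain ⟨G, hG⟩ := trinomial_dvd_X_pow_sub_chebyshevU (ω / 2) μ s
    refine ⟨G.map Complex.ofRealHom, ?_, ?_⟩
    · rw [Polynomial.map_map]; congr 1; ext; simp
    · simpa [trinomial_map, f, T, p, q, N, mul_div_cancel₀] using
        congrArg (map Complex.ofRealHom) hG
  have hT : T.natDegree = 2 * μ := trinomial_natDegree (by omega) (by omega) one_ne_zero
  have hdeg : (T * P).natDegree < N + μ := by
    have := natDegree_mul_le (p := T) (q := P)
    have : P.natDegree ≤ Fintype.card ι := by
      simpa using natDegree_prod_one_sub_C_mul_X_le z univ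
    omega
  have hfac := eq_mul_divByMonic_of_coeff_eq_zero hμ hT ⟨G, hfTG⟩ (by compute_degree)
    (dvd_mul_right T P) hgap hdeg
  have hT0 : T ≠ 0 := ne_zero_of_natDegree_gt (show 0 < T.natDegree by omega)
  have hGP : G ∣ P := ⟨_, mul_left_cancel₀ hT0 (by rw [← mul_assoc, ← hfTG, ← hfac])⟩
  obtain ⟨γ, hγ⟩ := exists_reverse_eq_C_mul_of_norm_eq_one hGreal
    (norm_eq_one_of_mem_roots_of_dvd habs hGP)
  have hp := eq_zero_of_reverse_eq_C_mul (p := (p : ℂ)) (q := q) (N := N) hμ (by omega)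
    (show f.reverse = C γ * f by
      rw [hfTG, reverse_mul_of_domain, reverse_trinomial_self hμ, hγ]; ring)
  simpa [p] using (by exact_mod_cast hp : p = 0)

/-- The right-hand sides `S_l` of the moment system. -/
def chebMoment (n μ : ℕ) (ω : ℝ) (l : ℤ) : ℂ :=
  if l = (n : ℤ) - 1 then (ω : ℂ)
  else if l = (n : ℤ) - 1 - μ ∨ l = (n : ℤ) - 1 + μ then 1 else 0

section Moments

variable {m μ n : ℕ} {ω : ℝ} {Z z : Fin m → ℂ}

theorem momentPoly_eq_X_pow_mul_trinomial (hμ : 0 < μ) (hμn : μ < n)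
    (hmom : ∀ l : ℤ, 0 ≤ l → l ≤ 2 * (n : ℤ) - 1 →
      ∑ k, Z k * z k ^ l = chebMoment n μ ω l) :
    momentPoly Z z (2 * n) = X ^ (n - 1 - μ) * trinomial 0 μ (2 * μ) 1 (ω : ℂ) 1 := by
  ext i
  rw [coeff_momentPoly, coeff_X_pow_mul']
  simp only [trinomial_def, coeff_add, coeff_C_mul_X_pow]
  by_cases hi : i < 2 * n
  · have h := hmom i (by omega) (by omega)
    simp only [zpow_natCast] at h
    rw [if_pos hi, h, chebMoment]
    split_ifs <;> first | omega | simp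
  · rw [if_neg hi]
    split_ifs <;> first | omega | simp

theorem coeff_trinomial_mul_prod_eq_zero (hμ : 0 < μ) (hμn : μ < n) (hm : m ≤ n)
    (hmom : ∀ l : ℤ, 0 ≤ l → l ≤ 2 * (n : ℤ) - 1 →
      ∑ k, Z k * z k ^ l = chebMoment n μ ω l)
    {i : ℕ} (hi₁ : μ < i) (hi₂ : i < n + 1 + μ) :
    (trinomial 0 μ (2 * μ) 1 (ω : ℂ) 1 * ∏ k, (1 - C (z k) * X)).coeff i = 0 := by
  have := coeff_momentPoly_mul_prod_eq_zero Z z (t := i + (n - 1 - μ)) (L := 2 * n)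
    (by rw [Fintype.card_fin]; omega) (by omega)
  rwa [momentPoly_eq_X_pow_mul_trinomial hμ hμn hmom, mul_assoc, coeff_X_pow_mul] at this

theorem sq_eq_one_of_moments (hm : m ≤ 1) (habs : ∀ k, ‖z k‖ = 1) (h0 : ∑ k, Z k = ω)
    (h1 : ∑ k, Z k * z k = 1) : ω ^ 2 = 1 := by
  interval_cases m
  · simp at h1
  · simp only [univ_unique, Fin.default_eq_zero, sum_singleton] at h0 h1
    have := congrArg norm h1
    rw [norm_mul, habs, mul_one, h0, Complex.norm_real, norm_one] at this
    rw [← sq_abs, ← Real.norm_eq_abs, this, one_pow]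

end Moments

end

theorem stmt14_general (μ s n : ℕ) (hμ : 1 ≤ μ) (hs : 2 ≤ s) (hn : n = s * μ - 1) (ω : ℝ)
    (m : ℕ) (hm : m ≤ n) (Z z : Fin m → ℂ)
    (habs : ∀ k, ‖z k‖ = 1)
    (hmom : ∀ l : ℤ, 0 ≤ l → l ≤ 2 * (n : ℤ) - 1 →
      ∑ k : Fin m, Z k * z k ^ l =
        if l = (n : ℤ) - 1 then (ω : ℂ)
        else if l = (n : ℤ) - 1 - μ ∨ l = (n : ℤ) - 1 + μ then 1 else 0) :
    Polynomial.eval (ω / 2) (Polynomial.Chebyshev.U ℝ s) = 0 := by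
  have hsμ : 2 * μ ≤ s * μ := Nat.mul_le_mul_right μ hs
  rcases Nat.lt_or_ge μ n with hμn | hnμ
  · refine chebyshevU_eval_eq_zero_of_coeff_eq_zero habs hμ hs
      (by rw [Fintype.card_fin]; omega) ω
      fun i hi₁ hi₂ => coeff_trinomial_mul_prod_eq_zero hμ hμn hm hmom hi₁ ?_
    rw [add_one_mul] at hi₂; omega
  -- `n = 1`: `S_{n-1-μ}` would sit at `l = -1`, so only `S_0 = ω` and `S_1 = 1` are prescribed
  obtain rfl : μ = 1 := by omega
  obtain ⟨rfl, rfl⟩ : s = 2 ∧ n = 1 := by rw [mul_one] at hn; omega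
  have h := sq_eq_one_of_moments hm habs (by simpa using hmom 0 le_rfl (by norm_num))
    (by simpa using hmom 1 (by norm_num) (by norm_num))
  simp only [Nat.cast_ofNat, Polynomial.Chebyshev.U_two, eval_sub, eval_mul, eval_ofNat, eval_pow,
    eval_X, eval_one]
  linear_combination h

/-- for n = sμ - 1, admissible solvability of the (possibly overdetermined)
moment system (nonzero weights, pairwise distinct unimodular nodes, m ≤ n terms) forces
U_s(ω/2) = 0. -/
theorem stmt14 (μ s n : ℕ) (hμ : 1 ≤ μ) (hs : 2 ≤ s) (hn : n = s * μ - 1) (ω : ℝ)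
    (m : ℕ) (hm : m ≤ n) (Z z : Fin m → ℂ)
    (hZ : ∀ k, Z k ≠ 0) (hz : Function.Injective z) (habs : ∀ k, ‖z k‖ = 1)
    (hmom : ∀ l : ℤ, 0 ≤ l → l ≤ 2 * (n : ℤ) - 1 →
      ∑ k : Fin m, Z k * z k ^ l =
        if l = (n : ℤ) - 1 then (ω : ℂ)
        else if l = (n : ℤ) - 1 - μ ∨ l = (n : ℤ) - 1 + μ then 1 else 0) :
    Polynomial.eval (ω / 2) (Polynomial.Chebyshev.U ℝ s) = 0 :=
  stmt14_general μ s n hμ hs hn ω m hm Z z habs hmom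
end

section
/- Let s ≥ 2 and n = 2s − 1. Then the generating polynomial for μ = 2 satisfies, identically in ω ∈ ℝ and z ∈ ℂ: G_n(ω,2;z) = (−1)^{s+1} r_s(ω) · z · R_{s−1}(ω; z²). -/
/-!
Order rows and columns by parity, the even ones reversed. The matrix of `G_{2t+1}(ω,2;z)` then
becomes the block matrix `[[P, Q], [T, 0]]`, where `T` is the `(t+1) × (t+1)` tridiagonal matrix
with `ω` on the diagonal and `1` beside it, and `Q` is `T` with its last row replaced by
`(z, z³, …, z^{2t+1})`; so `G = ± det T · det Q`. The continuant `det T_k` is the rescaled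
Chebyshev polynomial `S_k(ω) = (-1)^k r_k(ω)`. Expanding `det Q` along its last row, the minor
obtained by deleting column `c` is block lower triangular with diagonal blocks `T_c` and a
unitriangular matrix, so it equals `S_c(ω)`.
-/

open Matrix Polynomial Polynomial.Chebyshev

lemma Fin.val_succAbove_eq_ite {m : ℕ} (c : Fin (m + 1)) (j : Fin m) :
    (c.succAbove j : ℕ) = if (j : ℕ) < c then (j : ℕ) else j + 1 := by
  unfold Fin.succAbove
  split_ifs <;> simp_all [Fin.lt_def]

lemma Equiv.Perm.sign_sumComm_self (α : Type*) [Fintype α] [DecidableEq α] :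
    Perm.sign (Equiv.sumComm α α) = (-1) ^ Fintype.card α := by
  have h : ∀ x, boolProdEquivSum α (Equiv.prodCongrLeft (fun _ => swap false true) x) =
      Equiv.sumComm α α (boolProdEquivSum α x) := by
    rintro ⟨_ | _, _⟩ <;> rfl
  rw [← Perm.sign_eq_sign_of_equiv _ _ _ h, Perm.sign_prodCongrLeft]
  simp

lemma Matrix.det_fromBlocks_zero₂₂ {R n : Type*} [CommRing R] [Fintype n] [DecidableEq n]
    (A B C : Matrix n n R) :
    (fromBlocks A B C 0).det = (-1) ^ Fintype.card n * (C.det * B.det) := by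
  have h : fromBlocks A B C 0 = (fromBlocks C 0 A B).submatrix (Equiv.sumComm n n) id := by
    ext (i | i) (j | j) <;> rfl
  rw [h, det_permute, det_fromBlocks_zero₁₂, Equiv.Perm.sign_sumComm_self]
  push_cast
  ring

section Tridiagonal

variable {R : Type*} [CommRing R] (a : R)

def tridiagEntry (i j : ℕ) : R := if i = j then a else if i + 1 = j ∨ j + 1 = i then 1 else 0

def tridiag (m : ℕ) : Matrix (Fin m) (Fin m) R := of fun i j => tridiagEntry a i j

def tridiagDelCol (m c : ℕ) : Matrix (Fin m) (Fin m) R :=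
  of fun i j => tridiagEntry a i (if (j : ℕ) < c then j else j + 1)

lemma tridiag_submatrix_castSucc_succAbove (m : ℕ) (c : Fin (m + 1)) :
    (tridiag a (m + 1)).submatrix Fin.castSucc c.succAbove = tridiagDelCol a m c := by
  ext i j
  simp [tridiag, tridiagDelCol, Fin.val_succAbove_eq_ite]

lemma det_tridiagDelCol {m c : ℕ} (h : c ≤ m) :
    (tridiagDelCol a m c).det = (tridiag a c).det := by
  obtain ⟨d, rfl⟩ := Nat.exists_eq_add_of_le h
  set M := (tridiagDelCol a (c + d) c).submatrix finSumFinEquiv finSumFinEquiv with hM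
  have h₁₁ : M.toBlocks₁₁ = tridiag a c := by
    ext i j
    simp [M, toBlocks₁₁, tridiagDelCol, tridiag]
  have h₁₂ : M.toBlocks₁₂ = 0 := by
    ext i j
    simp only [M, toBlocks₁₂, tridiagDelCol, tridiagEntry, submatrix_apply, of_apply,
      finSumFinEquiv_apply_left, finSumFinEquiv_apply_right, Fin.val_castAdd, Fin.val_natAdd,
      add_lt_iff_neg_left, not_lt_zero, ↓reduceIte, Matrix.zero_apply]
    have := i.isLt
    rw [if_neg (by omega), if_neg (by omega)]
  have h₂₂ : M.toBlocks₂₂.det = 1 := by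
    rw [det_of_isLowerTriangular]
    · refine Finset.prod_eq_one fun i _ => ?_
      simp [M, toBlocks₂₂, tridiagDelCol, tridiagEntry]
    · intro i j (hij : (i : ℕ) < j)
      simp only [M, toBlocks₂₂, tridiagDelCol, tridiagEntry, submatrix_apply, of_apply,
        finSumFinEquiv_apply_right, Fin.val_natAdd, add_lt_iff_neg_left, not_lt_zero, ↓reduceIte,
        Nat.add_right_cancel_iff, Nat.add_left_cancel_iff]
      rw [if_neg (by omega), if_neg (by omega)]
  rw [← det_submatrix_equiv_self finSumFinEquiv, ← hM, ← M.fromBlocks_toBlocks, h₁₂,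
    det_fromBlocks_zero₁₂, h₁₁, h₂₂, mul_one]

lemma det_tridiag_add_two (k : ℕ) :
    (tridiag a (k + 2)).det = a * (tridiag a (k + 1)).det - (tridiag a k).det := by
  rw [det_succ_row _ (Fin.last (k + 1)), Fin.sum_univ_castSucc, Fin.sum_univ_castSucc,
    Finset.sum_eq_zero fun j _ => ?far, zero_add, Fin.succAbove_last,
    tridiag_submatrix_castSucc_succAbove, det_tridiagDelCol a (by simp)]
  case far =>
    have := j.isLt
    rw [show tridiag a (k + 2) (Fin.last (k + 1)) j.castSucc.castSucc = 0 by
      simp only [tridiag, tridiagEntry, of_apply, Fin.val_last, Fin.val_castSucc]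
      rw [if_neg (by omega), if_neg (by omega)], mul_zero, zero_mul]
  have h_minor : (tridiag a (k + 2)).submatrix Fin.castSucc Fin.castSucc = tridiag a (k + 1) := by
    ext i j
    simp [tridiag]
  have h_diag : tridiag a (k + 2) (Fin.last (k + 1)) (Fin.last (k + 1)) = a := by
    simp [tridiag, tridiagEntry]
  have h_sub : tridiag a (k + 2) (Fin.last (k + 1)) (Fin.last k).castSucc = 1 := by
    simp [tridiag, tridiagEntry]
  rw [h_minor, h_diag, h_sub, Fin.val_last, Fin.val_castSucc, Fin.val_last,
    Odd.neg_one_pow ⟨k, by ring⟩, Even.neg_one_pow ⟨k + 1, by ring⟩]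
  ring

lemma det_tridiag (m : ℕ) : (tridiag a m).det = (S R m).eval a := by
  induction m using Nat.twoStepInduction with
  | zero => simp
  | one => simp [tridiag, tridiagEntry, det_unique]
  | more k ih₀ ih₁ =>
    rw [det_tridiag_add_two, ih₀, ih₁]
    push_cast
    simp [S_add_two]

lemma det_updateRow_last_tridiag (m : ℕ) (v : Fin (m + 1) → R) :
    ((tridiag a (m + 1)).updateRow (Fin.last m) v).det =
      ∑ c : Fin (m + 1), (-1) ^ (m + c : ℕ) * v c * (S R c).eval a := by
  rw [det_succ_row _ (Fin.last m)]
  refine Finset.sum_congr rfl fun c _ => ?_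
  have h_minor : ((tridiag a (m + 1)).updateRow (Fin.last m) v).submatrix
      (Fin.last m).succAbove c.succAbove = tridiagDelCol a m c := by
    rw [Fin.succAbove_last, ← tridiag_submatrix_castSucc_succAbove]
    ext i j
    simp
  rw [h_minor, det_tridiagDelCol a (Nat.lt_succ_iff.mp c.isLt), det_tridiag, updateRow_self,
    Fin.val_last]

end Tridiagonal

noncomputable def parityEquiv (t : ℕ) : Fin (t + 1) ⊕ Fin (t + 1) ≃ Fin (2 * t + 1 + 1) :=
  Equiv.ofBijective
    (Sum.elim (fun a => ⟨2 * (t - a), by omega⟩) (fun b => ⟨2 * b + 1, by omega⟩))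
    ((Fintype.bijective_iff_injective_and_card _).mpr
      ⟨by rintro (a | a) (b | b) h <;> simp [Fin.ext_iff] at h ⊢ <;> omega, by simp; ring⟩)

lemma Gmat_two_eval_submatrix_parityEquiv (t : ℕ) (ω : ℝ) (z : ℂ) :
    ((Gmat (2 * t + 1) 2 ω).map (eval z)).submatrix (parityEquiv t) (parityEquiv t) =
      fromBlocks (of fun a a' : Fin (t + 1) => if (a : ℕ) = t then z ^ (2 * (t - a')) else 0)
        ((tridiag (ω : ℂ) (t + 1)).updateRow (Fin.last t) fun c => z ^ (2 * (c : ℕ) + 1))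
        (tridiag (ω : ℂ) (t + 1)) 0 := by
  ext (a | a) (b | b) <;>
    simp only [parityEquiv, Equiv.coe_ofBijective, submatrix_apply, Sum.elim_inl, Sum.elim_inr,
      map_apply, Gmat, of_apply, apply_ite (eval z), eval_pow, eval_X, eval_C, sig, Nat.cast_add,
      Nat.cast_mul, Nat.cast_ofNat, Nat.cast_one, fromBlocks_apply₁₁, fromBlocks_apply₁₂,
      fromBlocks_apply₂₁, fromBlocks_apply₂₂, updateRow_apply, tridiag, tridiagEntry,
      Matrix.zero_apply, Fin.ext_iff, Fin.val_last] <;>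
    split_ifs <;> first | rfl | contradiction | omega

lemma eval_Gpoly_two_mul_add_one (t : ℕ) (ω : ℝ) (z : ℂ) :
    (Gpoly (2 * t + 1) 2 ω).eval z = (-1) ^ (t + 1) * (S ℂ (t + 1 : ℕ)).eval (ω : ℂ) *
      ∑ c : Fin (t + 1), (-1) ^ (t + c : ℕ) * z ^ (2 * (c : ℕ) + 1) * (S ℂ c).eval (ω : ℂ) := by
  rw [Gpoly, ← coe_evalRingHom, RingHom.map_det, RingHom.mapMatrix_apply, coe_evalRingHom,
    ← det_submatrix_equiv_self (parityEquiv t), Gmat_two_eval_submatrix_parityEquiv,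
    det_fromBlocks_zero₂₂, det_tridiag, det_updateRow_last_tridiag, Fintype.card_fin, mul_assoc]

lemma chebr_eq_neg_one_pow_mul_eval_S (k : ℕ) (ω : ℝ) :
    chebr k ω = (-1) ^ k * (S ℝ k).eval ω := by
  induction k using Nat.twoStepInduction with
  | zero => simp [chebr]
  | one => simp [chebr]
  | more k ih₀ ih₁ =>
    simp only [chebr, ih₀, ih₁, Nat.cast_add, Nat.cast_ofNat, Nat.cast_one, S_add_two, eval_sub,
      eval_mul, eval_X]
    ring

lemma ofReal_eval_S (k : ℤ) (ω : ℝ) : (((S ℝ k).eval ω : ℝ) : ℂ) = (S ℂ k).eval (ω : ℂ) := by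
  rw [← map_S Complex.ofRealHom, eval_map]
  exact (eval₂_at_apply (p := S ℝ k) Complex.ofRealHom ω).symm

/-- for n = 2s - 1 and μ = 2 the generating polynomial factorizes as
G_n(ω,2;z) = (-1)^{s+1} r_s(ω) · z · ℛ_{s-1}(ω;z²). -/
theorem stmt15 (s : ℕ) (hs : 2 ≤ s) (n : ℕ) (hn : n = 2 * s - 1) (ω : ℝ) (z : ℂ) :
    (Gpoly n 2 ω).eval z =
      (-1) ^ (s + 1) * ((chebr s ω : ℝ) : ℂ) * z *
        ∑ k ∈ Finset.range s, ((chebr k ω : ℝ) : ℂ) * z ^ (2 * k) := by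
  obtain ⟨t, rfl⟩ : ∃ t, s = t + 1 := ⟨s - 1, by omega⟩
  obtain rfl : n = 2 * t + 1 := by omega
  simp only [eval_Gpoly_two_mul_add_one, chebr_eq_neg_one_pow_mul_eval_S, Complex.ofReal_mul,
    ofReal_eval_S, Finset.mul_sum,
    Fin.sum_univ_eq_sum_range fun c => (-1 : ℂ) ^ (t + c) * z ^ (2 * c + 1) * (S ℂ c).eval (ω : ℂ)]
  refine Finset.sum_congr rfl fun k _ => ?_
  push_cast
  ring
end
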